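/- arXiv:1910.02777 — 6 statements merged into one kernel-verified Lean document; each statement's English description precedes it below -/
import Mathlib

section
/- Let σ > 0 and let f : ℂ → ℂ be an entire function of exponential type not exceeding σ (i.e., for every ε > 0 there exists C_ε > 0 with |f(z)| ≤ C_ε e^{(σ+ε)|z|} for all z ∈ ℂ), which is bounded on the real axis, and which satisfies f(kπ/σ) = 0 for every k ∈ ℤ. Then there exists a constant λ ∈ ℂ such that f(z) = λ sin(σz) for all z ∈ ℂ. -/
/-!
Phragmén–Lindelöf in the half-planes `0 ≤ Im z` and `Im z ≤ 0`, applied to `f` of type `σ + ε`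
and followed by `ε → 0`, upgrades boundedness on `ℝ` to `‖f z‖ ≤ M e^{σ |Im z|}`. After rescaling
to `σ = 1`, the zeros of `sin` are simple and are zeros of `f`, so `g = f / sin` is entire.
On the lines `|Im z| = const ≥ 1` and `Re z ∈ π/2 + πℤ` one has `e^{|Im z|} ≤ 4 ‖sin z‖`, hence
`‖g‖ ≤ 4M`; every point lies in a rectangle bounded by such lines, so the maximum modulus principle
gives `‖g‖ ≤ 4M` everywhere and Liouville's theorem makes `g` constant.
-/

open Real

open Complex Filter Set Bornology Topology

section PhragmenLindelof

variable {f : ℂ → ℂ} {a C M : ℝ}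

lemma norm_le_mul_exp_mul_re (ha : 0 ≤ a) (hf : Differentiable ℂ f)
    (hgrowth : ∀ z, ‖f z‖ ≤ C * Real.exp (a * ‖z‖)) (hM : ∀ y : ℝ, ‖f (y * I)‖ ≤ M)
    {z : ℂ} (hz : 0 ≤ z.re) : ‖f z‖ ≤ M * Real.exp (a * z.re) := by
  set g : ℂ → ℂ := fun z => f z * exp (-a * z)
  have hg : ∀ z, ‖g z‖ = ‖f z‖ * Real.exp (-(a * z.re)) := fun z => by simp [g, norm_exp]
  have hgrowth_g : ∀ z, ‖g z‖ ≤ C * Real.exp (2 * a * ‖z‖) := fun z => by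
    have : -(a * z.re) ≤ a * ‖z‖ := by nlinarith [neg_abs_le z.re, abs_re_le_norm z]
    calc ‖g z‖ ≤ C * Real.exp (a * ‖z‖) * Real.exp (a * ‖z‖) := by
          rw [hg]; gcongr
          · exact (norm_nonneg _).trans (hgrowth z)
          · exact hgrowth z
      _ = C * Real.exp (2 * a * ‖z‖) := by rw [mul_assoc, ← Real.exp_add]; ring_nf
  have hbound_g : ‖g z‖ ≤ M := by
    refine PhragmenLindelof.right_half_plane_of_bounded_on_real
      (hf.mul (differentiable_id.const_mul _).cexp).diffContOnCl
      ⟨1, one_lt_two, 2 * a, .of_bound C (.of_forall fun z => ?_)⟩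
      ⟨C, eventually_map.2 <| (eventually_ge_atTop 0).mono fun x hx => ?_⟩ (fun y => ?_) hz
    · simpa [abs_of_pos (Real.exp_pos _)] using hgrowth_g z
    · change ‖g x‖ ≤ C
      rw [hg, ofReal_re, Real.exp_neg, ← div_eq_mul_inv, div_le_iff₀ (Real.exp_pos _)]
      simpa [abs_of_nonneg hx] using hgrowth x
    · simpa [hg] using hM y
  calc ‖f z‖ = ‖g z‖ * Real.exp (a * z.re) := by
        rw [hg, mul_assoc, ← Real.exp_add]; simp
    _ ≤ M * Real.exp (a * z.re) := by gcongr

lemma norm_le_mul_exp_mul_im (ha : 0 ≤ a) (hf : Differentiable ℂ f)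
    (hgrowth : ∀ z, ‖f z‖ ≤ C * Real.exp (a * ‖z‖)) (hM : ∀ x : ℝ, ‖f x‖ ≤ M)
    {z : ℂ} (hz : 0 ≤ z.im) : ‖f z‖ ≤ M * Real.exp (a * z.im) := by
  simpa [← mul_assoc] using norm_le_mul_exp_mul_re (f := fun w => f (I * w)) ha
    (hf.comp (differentiable_id.const_mul I)) (fun w => by simpa using hgrowth (I * w))
    (fun y => by simpa [mul_left_comm I, ← ofReal_neg] using hM (-y)) (z := -I * z) (by simpa)

lemma norm_le_mul_exp_mul_abs_im (ha : 0 ≤ a) (hf : Differentiable ℂ f)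
    (hgrowth : ∀ z, ‖f z‖ ≤ C * Real.exp (a * ‖z‖)) (hM : ∀ x : ℝ, ‖f x‖ ≤ M) (z : ℂ) :
    ‖f z‖ ≤ M * Real.exp (a * |z.im|) := by
  rcases le_total 0 z.im with hz | hz
  · rw [abs_of_nonneg hz]
    exact norm_le_mul_exp_mul_im ha hf hgrowth hM hz
  · rw [abs_of_nonpos hz]
    simpa using norm_le_mul_exp_mul_im (f := fun w => f (-w)) ha (hf.comp differentiable_neg)
      (fun w => by simpa using hgrowth (-w)) (fun x => by simpa using hM (-x)) (z := -z)
      (by simpa using hz)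

lemma norm_le_mul_exp_mul_abs_im_of_expType (ha : 0 ≤ a) (hf : Differentiable ℂ f)
    (htype : ∀ ε : ℝ, 0 < ε → ∃ C : ℝ, ∀ z, ‖f z‖ ≤ C * Real.exp ((a + ε) * ‖z‖))
    (hM : ∀ x : ℝ, ‖f x‖ ≤ M) (z : ℂ) : ‖f z‖ ≤ M * Real.exp (a * |z.im|) := by
  have hε : ∀ ε ∈ Ioi (0 : ℝ), ‖f z‖ ≤ M * Real.exp ((a + ε) * |z.im|) := fun ε hε =>
    have ⟨C, hC⟩ := htype ε hε
    norm_le_mul_exp_mul_abs_im (by linarith [mem_Ioi.1 hε]) hf hC hM z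
  have hlim : Tendsto (fun ε => M * Real.exp ((a + ε) * |z.im|)) (𝓝[>] 0)
      (𝓝 (M * Real.exp (a * |z.im|))) :=
    (Continuous.tendsto' (by fun_prop) _ _ (by simp)).mono_left nhdsWithin_le_nhds
  exact ge_of_tendsto hlim (eventually_nhdsWithin_of_forall hε)

end PhragmenLindelof

lemma Complex.norm_sin_sq (z : ℂ) :
    ‖sin z‖ ^ 2 = Real.sin z.re ^ 2 + Real.sinh z.im ^ 2 := by
  have hsin : sin z = (Real.sin z.re * Real.cosh z.im : ℝ) +
      (Real.cos z.re * Real.sinh z.im : ℝ) * I := by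
    conv_lhs => rw [← re_add_im z, sin_add, sin_mul_I, cos_mul_I]
    push_cast [ofReal_sin, ofReal_cos, ofReal_sinh, ofReal_cosh]
    ring
  rw [hsin, Complex.sq_norm, normSq_add_mul_I]
  nlinarith [Real.sin_sq_add_cos_sq z.re, Real.cosh_sq z.im]

lemma Complex.sinh_abs_im_le_norm_sin (z : ℂ) : Real.sinh |z.im| ≤ ‖sin z‖ := by
  rw [← Real.abs_sinh, ← sq_le_sq₀ (abs_nonneg _) (norm_nonneg _), sq_abs, norm_sin_sq]
  nlinarith [sq_nonneg (Real.sin z.re)]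

lemma Complex.exp_abs_im_le_four_mul_norm_sin {z : ℂ} (hz : 1 ≤ |z.im| ∨ Real.cos z.re = 0) :
    Real.exp |z.im| ≤ 4 * ‖sin z‖ := by
  rcases hz with him | hcos
  · have htwo : 2 ≤ Real.exp (2 * |z.im|) := by
      linarith [Real.add_one_le_exp (2 * |z.im|)]
    have hexp : Real.exp (2 * |z.im|) = Real.exp |z.im| * Real.exp |z.im| := by
      rw [← Real.exp_add]; ring_nf
    have hinv : Real.exp (-|z.im|) * Real.exp |z.im| = 1 := by
      rw [← Real.exp_add]; simp
    have := sinh_abs_im_le_norm_sin z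
    rw [Real.sinh_eq] at this
    nlinarith [Real.exp_pos |z.im|, Real.exp_pos (-|z.im|)]
  · have hsq : ‖sin z‖ ^ 2 = Real.cosh |z.im| ^ 2 := by
      rw [norm_sin_sq, Real.cosh_abs, Real.cosh_sq, Real.sin_sq, hcos]; ring
    have hnorm : ‖sin z‖ = Real.cosh |z.im| :=
      (sq_eq_sq₀ (norm_nonneg _) (Real.cosh_pos _).le).1 hsq
    rw [hnorm, Real.cosh_eq]
    linarith [Real.exp_pos |z.im|, Real.exp_pos (-|z.im|)]

lemma exists_differentiable_eq_mul_of_simple_zeros {f s : ℂ → ℂ} (hf : Differentiable ℂ f)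
    (hs : Differentiable ℂ s) (hzero : ∀ z, s z = 0 → f z = 0 ∧ deriv s z ≠ 0) :
    ∃ g : ℂ → ℂ, Differentiable ℂ g ∧ ∀ z, f z = g z * s z := by
  classical
  refine ⟨fun z => if s z = 0 then deriv f z / deriv s z else f z / s z, fun z₀ => ?_, fun z => ?_⟩
  · by_cases hz₀ : s z₀ = 0
    · have hdslope {h : ℂ → ℂ} (hh : Differentiable ℂ h) : DifferentiableAt ℂ (dslope h z₀) z₀ :=
        ((differentiableOn_dslope univ_mem).2 hh.differentiableOn).differentiableAt univ_mem
      have hne : ∀ᶠ z in 𝓝 z₀, dslope s z₀ z ≠ 0 :=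
        (hdslope hs).continuousAt.eventually_ne (by rw [dslope_same]; exact (hzero z₀ hz₀).2)
      refine ((hdslope hf).div (hdslope hs) hne.self_of_nhds).congr_of_eventuallyEq ?_
      filter_upwards [hne] with z hz
      rcases eq_or_ne z z₀ with rfl | hzz₀
      · simp [hz₀]
      -- away from `z₀`, both `f` and `s` are `(z - z₀)` times their slopes at `z₀`
      have hfz : f z = (z - z₀) * dslope f z₀ z := by
        rw [← smul_eq_mul, sub_smul_dslope, (hzero z₀ hz₀).1, sub_zero]
      have hsz : s z = (z - z₀) * dslope s z₀ z := by
        rw [← smul_eq_mul, sub_smul_dslope, hz₀, sub_zero]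
      have hsz' : s z ≠ 0 := by rw [hsz]; exact mul_ne_zero (sub_ne_zero.2 hzz₀) hz
      rw [if_neg hsz', Pi.div_apply, hfz, hsz, mul_div_mul_left _ _ (sub_ne_zero.2 hzz₀)]
    · refine ((hf z₀).div (hs z₀) hz₀).congr_of_eventuallyEq ?_
      filter_upwards [(hs z₀).continuousAt.eventually_ne hz₀] with z hz
      simp [hz]
  · by_cases hz : s z = 0
    · simp [hz, (hzero z hz).1]
    · simp [hz]

lemma exists_isBounded_mem_closure_forall_mem_frontier (z : ℂ) :
    ∃ U : Set ℂ, IsBounded U ∧ z ∈ closure U ∧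
      ∀ w ∈ frontier U, 1 ≤ |w.im| ∨ Real.cos w.re = 0 := by
  set k : ℤ := round (z.re / π)
  set a := k * π - π / 2 with ha
  set b := k * π + π / 2 with hb
  set c := |z.im| + 1 with hc_def
  have hab : a < b := by linarith [pi_pos]
  have hc1 : 1 ≤ c := by linarith [abs_nonneg z.im]
  have hc : -c < c := by linarith
  refine ⟨Ioo a b ×ℂ Ioo (-c) c,
    (Metric.isBounded_Ioo _ _).reProdIm (Metric.isBounded_Ioo _ _), ?_, ?_⟩
  · rw [closure_reProdIm, closure_Ioo hab.ne, closure_Ioo hc.ne, mem_reProdIm]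
    have hk : |z.re / π - k| ≤ 1 / 2 := abs_sub_round _
    have hre : |z.re - k * π| ≤ π / 2 := by
      have : z.re - k * π = (z.re / π - k) * π := by field_simp
      rw [this, abs_mul, abs_of_pos pi_pos]
      nlinarith [pi_pos]
    refine ⟨⟨?_, ?_⟩, ?_, ?_⟩ <;>
      linarith [abs_le.1 hre, neg_abs_le z.im, le_abs_self z.im]
  · intro w hw
    rw [frontier_reProdIm, closure_Ioo hab.ne, closure_Ioo hc.ne, frontier_Ioo hab,
      frontier_Ioo hc] at hw
    rcases hw with ⟨-, hw⟩ | ⟨hw, -⟩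
    · left
      obtain hw | hw : w.im = -c ∨ w.im = c := hw
      · rw [hw, abs_neg, abs_of_pos (by linarith)]; exact hc1
      · rw [hw, abs_of_pos (by linarith)]; exact hc1
    · right
      rw [Real.cos_eq_zero_iff]
      rcases hw with hw | hw
      · exact ⟨k - 1, by rw [hw]; push_cast; ring⟩
      · exact ⟨k, by rw [hw]; ring⟩

theorem exists_eq_mul_sin_of_norm_le_mul_exp_abs_im {f : ℂ → ℂ} {M : ℝ} (hf : Differentiable ℂ f)
    (hgrowth : ∀ z, ‖f z‖ ≤ M * Real.exp |z.im|) (hzero : ∀ k : ℤ, f (k * π) = 0) :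
    ∃ lam : ℂ, ∀ z, f z = lam * sin z := by
  obtain ⟨g, hg, hfg⟩ := exists_differentiable_eq_mul_of_simple_zeros hf differentiable_sin
    fun z hz => by
      obtain ⟨k, rfl⟩ := sin_eq_zero_iff.1 hz
      refine ⟨hzero k, ?_⟩
      rw [Complex.deriv_sin]
      intro hcos
      simpa [hz, hcos] using sin_sq_add_cos_sq (k * π : ℂ)
  have hfrontier : ∀ w : ℂ, 1 ≤ |w.im| ∨ Real.cos w.re = 0 → ‖g w‖ ≤ 4 * M := fun w hw => by
    have hsin := exp_abs_im_le_four_mul_norm_sin hw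
    have hpos : 0 < ‖sin w‖ := by linarith [Real.exp_pos |w.im|]
    have hM : 0 ≤ M := by simpa using (norm_nonneg _).trans (hgrowth 0)
    refine le_of_mul_le_mul_right ?_ hpos
    calc ‖g w‖ * ‖sin w‖ = ‖f w‖ := by rw [hfg, norm_mul]
      _ ≤ M * Real.exp |w.im| := hgrowth w
      _ ≤ 4 * M * ‖sin w‖ := by nlinarith
  have hbound : ∀ z, ‖g z‖ ≤ 4 * M := fun z =>
    have ⟨U, hU, hzU, hUfr⟩ := exists_isBounded_mem_closure_forall_mem_frontier z
    norm_le_of_forall_mem_frontier_norm_le hU hg.diffContOnCl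
      (fun w hw => hfrontier w (hUfr w hw)) hzU
  obtain ⟨lam, hlam⟩ := hg.exists_const_forall_eq_of_bounded <|
    isBounded_iff_forall_norm_le.2 ⟨4 * M, by rintro _ ⟨z, rfl⟩; exact hbound z⟩
  exact ⟨lam, fun z => by rw [hfg, hlam]⟩

/-- Lemma 2: An entire function of exponential type at most `σ`,
bounded on the real axis, vanishing at all points `kπ/σ`, `k ∈ ℤ`, is a constant
multiple of `sin (σ z)`. -/
theorem entire_expType_bounded_vanishing_eq_sin
    (σ : ℝ) (hσ : 0 < σ) (f : ℂ → ℂ)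
    (hdiff : Differentiable ℂ f)
    (htype : ∀ ε : ℝ, 0 < ε → ∃ C : ℝ, 0 < C ∧
      ∀ z : ℂ, ‖f z‖ ≤ C * Real.exp ((σ + ε) * ‖z‖))
    (hbdd : ∃ M : ℝ, ∀ x : ℝ, ‖f x‖ ≤ M)
    (hzero : ∀ k : ℤ, f ((k : ℂ) * π / σ) = 0) :
    ∃ lam : ℂ, ∀ z : ℂ, f z = lam * Complex.sin (σ * z) := by
  obtain ⟨M, hM⟩ := hbdd
  have hgrowth := norm_le_mul_exp_mul_abs_im_of_expType hσ.le hdiff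
    (fun ε hε => (htype ε hε).imp fun _ => And.right) hM
  have hσ' : (σ : ℂ) ≠ 0 := ofReal_ne_zero.2 hσ.ne'
  obtain ⟨lam, hlam⟩ := exists_eq_mul_sin_of_norm_le_mul_exp_abs_im (f := fun w => f (w / σ))
    (hdiff.comp (differentiable_id.div_const _))
    (fun w => by simpa [abs_div, abs_of_pos hσ, mul_div_cancel₀ _ hσ.ne'] using hgrowth (w / σ))
    hzero
  exact ⟨lam, fun z => by simpa [mul_div_cancel_left₀ _ hσ'] using hlam (σ * z)⟩
end

section
/- Let μ be a finite (positive) Borel measure on ℝ and let f(x) = ∫_ℝ e^{ixt} dμ(t), so f ∈ W⁺(ℝ). Let ℓ_f : ℝ → ℂ be the piecewise linear continuous function interpolating f at the integers: ℓ_f(x) = (1 − (x − ⌊x⌋)) f(⌊x⌋) + (x − ⌊x⌋) f(⌊x⌋ + 1). Then there exists a finite (positive) Borel measure ν on ℝ such that ℓ_f(x) = ∫_ℝ e^{ixt} dν(t) for all x ∈ ℝ, and ν(ℝ) ≤ μ(ℝ); that is, ℓ_f ∈ W⁺(ℝ) with ‖ℓ_f‖_W ≤ ‖f‖_W. -/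
/-!
For a single frequency `t`, the zigzag of `y ↦ exp (i y t)` is `exp (i x t)` times the 1-periodic
function equal to `(1 - θ + θ exp (i t)) exp (-i θ t)` on `[0, 1)`. Its Fourier coefficients are
`sinc ((t + 2πn) / 2) ^ 2`, the Fourier transform of the hat function sampled along `t + 2πℤ`:
nonnegative and summable. Hence the zigzag of `exp (i · t)` at `x` is
`∑ₙ sinc ((t + 2πn) / 2) ^ 2 exp (i x (t + 2πn))`, and at `x = 0` the weights sum to `1`.
Integrating in `t` against `μ` exhibits `ℓ_f` as the transform of
`ν = ∑ₙ (t ↦ t + 2πn)₊ (sinc ((t + 2πn) / 2) ^ 2 • μ)`, a positive measure of the same mass as `μ`.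
-/

open MeasureTheory Real
open scoped NNReal ENNReal Complex
open Complex (I)

noncomputable def zigzag (f : ℝ → ℂ) (x : ℝ) : ℂ :=
  (1 - ((Int.fract x : ℝ) : ℂ)) * f (⌊x⌋ : ℝ) + ((Int.fract x : ℝ) : ℂ) * f ((⌊x⌋ : ℝ) + 1)

lemma zigzag_integral {α : Type*} [MeasurableSpace α] {μ : Measure α} {g : ℝ → α → ℂ}
    (hg : ∀ y, Integrable (g y) μ) (x : ℝ) :
    zigzag (fun y => ∫ t, g y t ∂μ) x = ∫ t, zigzag (fun y => g y t) x ∂μ := by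
  simp only [zigzag]
  rw [integral_add ((hg _).const_mul _) ((hg _).const_mul _), integral_const_mul,
    integral_const_mul]

section SumMapWithDensity

variable {α β ι : Type*} [MeasurableSpace α] [MeasurableSpace β] [Countable ι]
  {μ : Measure α} {w : ι → α → ℝ≥0} {φ : ι → α → β}

lemma tsum_lintegral_eq_of_hasSum_one (hw : ∀ i, Measurable (w i))
    (h1 : ∀ a, HasSum (w · a) 1) :
    ∑' i, ∫⁻ a, w i a ∂μ = μ Set.univ := by
  rw [← lintegral_tsum fun i => (hw i).coe_nnreal_ennreal.aemeasurable]
  simp_rw [← ENNReal.coe_tsum (h1 _).summable, (h1 _).tsum_eq, ENNReal.coe_one, lintegral_one]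

lemma sum_map_withDensity_univ (hw : ∀ i, Measurable (w i)) (hφ : ∀ i, Measurable (φ i))
    (h1 : ∀ a, HasSum (w · a) 1) :
    (Measure.sum fun i => (μ.withDensity fun a => w i a).map (φ i)) Set.univ = μ Set.univ := by
  rw [Measure.sum_apply _ MeasurableSet.univ, ← tsum_lintegral_eq_of_hasSum_one hw h1]
  simp_rw [Measure.map_apply (hφ _) MeasurableSet.univ, Set.preimage_univ,
    withDensity_apply _ MeasurableSet.univ, Measure.restrict_univ]

lemma integral_sum_map_withDensity [IsFiniteMeasure μ] {E : Type*} [NormedAddCommGroup E]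
    [NormedSpace ℝ E] (hw : ∀ i, Measurable (w i)) (hφ : ∀ i, Measurable (φ i))
    (h1 : ∀ a, HasSum (w · a) 1) {g : β → E} (hg : StronglyMeasurable g) {C : ℝ≥0}
    (hC : ∀ b, ‖g b‖ ≤ C) :
    ∫ b, g b ∂(Measure.sum fun i => (μ.withDensity fun a => w i a).map (φ i)) =
      ∫ a, ∑' i, w i a • g (φ i a) ∂μ := by
  have : IsFiniteMeasure (Measure.sum fun i => (μ.withDensity fun a => w i a).map (φ i)) :=
    ⟨by rw [sum_map_withDensity_univ hw hφ h1]; exact measure_lt_top μ _⟩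
  rw [integral_sum_measure (.of_bound hg.aestronglyMeasurable C (ae_of_all _ hC)), integral_tsum]
  · congr with i
    rw [integral_map (hφ i).aemeasurable hg.aestronglyMeasurable,
      integral_withDensity_eq_integral_smul (hw i)]
  · exact fun i =>
      ((hw i).stronglyMeasurable.smul (hg.comp_measurable (hφ i))).aestronglyMeasurable
  · refine ne_top_of_le_ne_top
      (ENNReal.mul_ne_top (measure_ne_top μ Set.univ) ENNReal.coe_ne_top (b := C)) ?_
    calc ∑' i, ∫⁻ a, ‖w i a • g (φ i a)‖ₑ ∂μ ≤ ∑' i, ∫⁻ a, w i a * C ∂μ := by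
          gcongr with i a
          rw [NNReal.smul_def, enorm_smul]
          gcongr
          · simp
          · exact enorm_le_coe.mpr (hC _)
      _ = μ Set.univ * C := by
          simp_rw [lintegral_mul_const _ (hw _).coe_nnreal_ennreal, ENNReal.tsum_mul_right,
            tsum_lintegral_eq_of_hasSum_one hw h1]

end SumMapWithDensity

lemma sinc_sq_le_one_div_sq {x : ℝ} (hx : x ≠ 0) : sinc x ^ 2 ≤ 1 / x ^ 2 := by
  rw [sinc_of_ne_zero hx, div_pow]
  exact div_le_div_of_nonneg_right (sin_sq_le_one x) (sq_nonneg x)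

lemma summable_sinc_sq_int_add (a : ℝ) : Summable fun n : ℤ => sinc (π * (n + a)) ^ 2 := by
  have hfin : {n : ℤ | (n : ℝ) + a = 0}.Finite := by
    refine Set.Subsingleton.finite fun m hm n hn => ?_
    exact_mod_cast (show (m : ℝ) = n by linarith [hm.out, hn.out])
  refine (((Real.summable_one_div_int_add_rpow a 2).mpr one_lt_two).mul_left (π ^ 2)⁻¹)
    |>.of_norm_bounded_eventually (hfin.subset fun n hn => ?_)
  by_contra h
  refine hn ?_
  simp only [Set.mem_ofPred_eq, norm_pow, norm_eq_abs, sq_abs, rpow_two]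
  rw [← one_div, one_div_mul_one_div, ← mul_pow]
  exact sinc_sq_le_one_div_sq (mul_ne_zero pi_ne_zero h)

lemma sinc_half_sq {s : ℝ} (hs : s ≠ 0) : sinc (s / 2) ^ 2 = 2 * (1 - cos s) / s ^ 2 := by
  rw [sinc_of_ne_zero (by positivity), div_pow, sin_sq, cos_sq (s / 2),
    show 2 * (s / 2) = s by ring]
  field_simp
  ring

noncomputable def zigzagProfile (t θ : ℝ) : ℂ :=
  (1 - θ + θ * cexp (I * t)) * cexp (-(I * θ * t))

lemma integral_zigzagProfile (s : ℝ) :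
    ∫ θ in (0 : ℝ)..1, zigzagProfile s θ = (sinc (s / 2) ^ 2 : ℝ) := by
  rcases eq_or_ne s 0 with rfl | hs
  · simp [zigzagProfile]
  set c : ℂ := -(I * s)
  set d : ℂ := cexp (I * s) - 1
  have hs' : (s : ℂ) ≠ 0 := Complex.ofReal_ne_zero.mpr hs
  have hG (θ : ℝ) : HasDerivAt (fun θ : ℝ => cexp (c * θ) * ((1 + θ * d) / c - d / c ^ 2))
      (zigzagProfile s θ) θ := by
    have h1 := ((hasDerivAt_id (θ : ℂ)).const_mul c).cexp.comp_ofReal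
    have h2 := (((hasDerivAt_id (θ : ℂ)).mul_const d).const_add 1).div_const c
      |>.sub_const (d / c ^ 2) |>.comp_ofReal
    refine (h1.mul h2).congr_deriv ?_
    simp only [zigzagProfile, id, c, d]
    field_simp
    ring_nf
  rw [intervalIntegral.integral_eq_sub_of_hasDerivAt (fun θ _ => hG θ)
    ((by unfold zigzagProfile; fun_prop : Continuous _).intervalIntegrable _ _), sinc_half_sq hs]
  have hcos : Complex.cos s = (cexp (I * s) + cexp (-(I * s))) / 2 := by
    rw [Complex.cos, mul_comm _ I, neg_mul, mul_comm _ I]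
  have hinv : cexp (I * s) * cexp (-(I * s)) = 1 := by rw [← Complex.exp_add]; simp
  push_cast
  simp only [c, d, mul_one, mul_zero, Complex.exp_zero, hcos]
  field_simp
  linear_combination (-(I * s + 1)) * hinv + (cexp (I * s) + cexp (-(I * s)) - 2) * Complex.I_sq

lemma fourierCoeff_zigzagProfile (t : ℝ) (n : ℤ) :
    fourierCoeff (AddCircle.liftIco 1 0 (zigzagProfile t)) n =
      (sinc ((t + 2 * π * n) / 2) ^ 2 : ℝ) := by
  rw [fourierCoeff_liftIco_eq, fourierCoeffOn_eq_integral, ← integral_zigzagProfile]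
  simp only [fourier_coe_apply, smul_eq_mul]
  norm_num
  congr 1 with θ
  have hperiod : cexp (I * ↑(t + 2 * π * n)) = cexp (I * t) := by
    rw [show I * ↑(t + 2 * π * n) = I * t + n * (2 * π * I) by push_cast; ring]
    exact Complex.exp_periodic.int_mul n _
  have hsplit : cexp (-(I * θ * ↑(t + 2 * π * n))) =
      cexp (-(2 * π * I * n * θ)) * cexp (-(I * θ * t)) := by
    rw [← Complex.exp_add]; push_cast; ring_nf
  simp only [zigzagProfile, hperiod, hsplit]
  ring

lemma exp_mul_zigzagProfile_fract (t x : ℝ) :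
    cexp (I * x * t) * zigzagProfile t (Int.fract x) = zigzag (fun y => cexp (I * y * t)) x := by
  set θ := Int.fract x
  have hx : (x : ℂ) = (⌊x⌋ : ℝ) + (θ : ℝ) := by exact_mod_cast (Int.floor_add_fract x).symm
  have hinv : cexp (I * (θ : ℝ) * t) * cexp (-(I * (θ : ℝ) * t)) = 1 := by
    rw [← Complex.exp_add, add_neg_cancel, Complex.exp_zero]
  have hstep : cexp (I * ↑(⌊x⌋ + 1 : ℝ) * t) = cexp (I * (⌊x⌋ : ℝ) * t) * cexp (I * t) := by
    rw [← Complex.exp_add]; push_cast; ring_nf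
  rw [zigzag, zigzagProfile, hx, mul_add, add_mul, Complex.exp_add, hstep]
  linear_combination cexp (I * (⌊x⌋ : ℝ) * t) * (1 - (θ : ℝ) + (θ : ℝ) * cexp (I * t)) * hinv

lemma hasSum_zigzag_exp (t x : ℝ) :
    HasSum (fun n : ℤ => sinc ((t + 2 * π * n) / 2) ^ 2 • cexp (I * x * ↑(t + 2 * π * n)))
      (zigzag (fun y => cexp (I * y * t)) x) := by
  have hcont : Continuous (AddCircle.liftIco 1 0 (zigzagProfile t)) := by
    refine AddCircle.liftIco_zero_continuous ?_
      (by unfold zigzagProfile; fun_prop : Continuous _).continuousOn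
    simp [zigzagProfile, ← Complex.exp_add]
  have hsum : Summable (fourierCoeff (AddCircle.liftIco 1 0 (zigzagProfile t))) := by
    rw [funext (fourierCoeff_zigzagProfile t), Complex.summable_ofReal]
    convert summable_sinc_sq_int_add (t / (2 * π)) using 4
    field_simp
    ring
  have hval : AddCircle.liftIco 1 0 (zigzagProfile t) (x : AddCircle (1 : ℝ)) =
      zigzagProfile t (Int.fract x) := by
    rw [← AddCircle.coe_fract,
      AddCircle.liftIco_zero_coe_apply ⟨Int.fract_nonneg x, Int.fract_lt_one x⟩]
  have hseries := (has_pointwise_sum_fourier_series_of_summable (f := ⟨_, hcont⟩) hsum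
    (x : AddCircle (1 : ℝ))).mul_left (cexp (I * x * t))
  rw [ContinuousMap.coe_mk, hval, exp_mul_zigzagProfile_fract] at hseries
  refine hseries.congr_fun fun n => ?_
  rw [fourierCoeff_zigzagProfile, fourier_coe_apply, smul_eq_mul, Complex.real_smul,
    mul_left_comm, ← Complex.exp_add]
  push_cast
  ring_nf

lemma hasSum_sinc_sq (t : ℝ) : HasSum (fun n : ℤ => sinc ((t + 2 * π * n) / 2) ^ 2) 1 := by
  have h := hasSum_zigzag_exp t 0
  simp only [zigzag, Int.fract_zero, Int.floor_zero, Complex.ofReal_zero, Int.cast_zero, mul_zero,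
    zero_mul, Complex.exp_zero, sub_zero, add_zero, Complex.real_smul, mul_one] at h
  exact Complex.hasSum_ofReal.mp h

/-- Theorem 2 for `W⁺`: If `f` is the Fourier–Stieltjes transform of a
finite positive measure `μ` (so `f ∈ W⁺(ℝ)`), then the piecewise linear interpolant
`ℓ_f` of `f` at the integers is the Fourier–Stieltjes transform of a finite positive
measure `ν` with `ν(ℝ) ≤ μ(ℝ)`, i.e. `ℓ_f ∈ W⁺(ℝ)` with `‖ℓ_f‖_W ≤ ‖f‖_W`. -/
theorem zigzag_of_positive_definite
    (μ : Measure ℝ) [IsFiniteMeasure μ]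
    (f : ℝ → ℂ)
    (hf : ∀ x : ℝ, f x = ∫ t : ℝ, Complex.exp (Complex.I * x * t) ∂μ)
    (ℓ : ℝ → ℂ)
    (hℓ : ∀ x : ℝ, ℓ x = (1 - ((Int.fract x : ℝ) : ℂ)) * f (⌊x⌋ : ℝ)
      + ((Int.fract x : ℝ) : ℂ) * f ((⌊x⌋ : ℝ) + 1)) :
    ∃ ν : Measure ℝ, IsFiniteMeasure ν ∧
      (∀ x : ℝ, ℓ x = ∫ t : ℝ, Complex.exp (Complex.I * x * t) ∂ν) ∧
      ν Set.univ ≤ μ Set.univ := by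
  let w : ℤ → ℝ → ℝ≥0 := fun n t => ⟨sinc ((t + 2 * π * n) / 2) ^ 2, sq_nonneg _⟩
  have hw (n : ℤ) : Measurable (w n) := Measurable.subtype_mk (by fun_prop)
  have hφ (n : ℤ) : Measurable fun t : ℝ => t + 2 * π * n := measurable_add_const _
  have h1 (t : ℝ) : HasSum (w · t) 1 := NNReal.hasSum_coe.mp (hasSum_sinc_sq t)
  have hexp (x : ℝ) : StronglyMeasurable fun s : ℝ => cexp (I * x * s) :=
    (by fun_prop : Continuous _).stronglyMeasurable
  have hexp_le (x s : ℝ) : ‖cexp (I * x * s)‖ ≤ (1 : ℝ≥0) := by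
    rw [mul_assoc, ← Complex.ofReal_mul, Complex.norm_exp_I_mul_ofReal, NNReal.coe_one]
  have hmass := sum_map_withDensity_univ (μ := μ) hw hφ h1
  refine ⟨_, ⟨hmass.trans_lt (measure_lt_top μ _)⟩, fun x => ?_, hmass.le⟩
  rw [integral_sum_map_withDensity hw hφ h1 (hexp x) (hexp_le x), (funext hℓ : ℓ = zigzag f),
    (funext hf : f = _), zigzag_integral fun y => .of_bound (hexp y).aestronglyMeasurable 1
      (ae_of_all _ (hexp_le y))]
  congr with t
  simp_rw [NNReal.smul_def]
  exact (hasSum_zigzag_exp t x).tsum_eq.symm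
end

section
/- For every real y that is not an integer multiple of 2π, Σ_{k∈ℤ} (sin((y + 2kπ)/2))² / (y + 2kπ)² = 1/4. -/
/-! Parseval's identity for `t ↦ exp (i θ t)` on `[0, 1]`: its `n`-th Fourier coefficient is
`∫₀¹ exp (i (θ - 2πn) t) dt`, whose squared modulus is `4 sin² ((θ - 2πn) / 2) / (θ - 2πn)²`, and
its squared L² norm is `1`. -/

open Real Complex MeasureTheory

lemma norm_sq_integral_cexp_I_mul {θ : ℝ} (hθ : θ ≠ 0) :
    ‖∫ t in (0 : ℝ)..1, cexp (I * θ * t)‖ ^ 2 = 4 * Real.sin (θ / 2) ^ 2 / θ ^ 2 := by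
  rw [integral_exp_mul_complex (mul_ne_zero I_ne_zero (ofReal_ne_zero.mpr hθ))]
  simp only [ofReal_one, mul_one, ofReal_zero, mul_zero, Complex.exp_zero, norm_div,
    norm_exp_I_mul_ofReal_sub_one, norm_mul, norm_I, norm_real, Real.norm_eq_abs, one_mul, div_pow,
    mul_pow, sq_abs]
  norm_num

lemma norm_cexp_I_mul (θ t : ℝ) : ‖cexp (I * θ * t)‖ = 1 := by
  simp [norm_exp]

lemma fourierCoeffOn_cexp_I_mul (θ : ℝ) (n : ℤ) :
    fourierCoeffOn zero_lt_one (fun t : ℝ ↦ cexp (I * θ * t)) n =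
      ∫ t in (0 : ℝ)..1, cexp (I * ↑(θ - 2 * π * n) * t) := by
  rw [fourierCoeffOn_eq_integral]
  simp only [sub_zero, div_one, one_smul]
  refine intervalIntegral.integral_congr fun t _ ↦ ?_
  rw [fourier_coe_apply, smul_eq_mul, ← Complex.exp_add]
  push_cast
  ring_nf

theorem hasSum_four_mul_sin_sq_div_sq {θ : ℝ} (hθ : ∀ n : ℤ, θ ≠ 2 * π * n) :
    HasSum (fun n : ℤ ↦ 4 * Real.sin ((θ - 2 * π * n) / 2) ^ 2 / (θ - 2 * π * n) ^ 2) 1 := by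
  have hL2 : MemLp (fun t : ℝ ↦ cexp (I * θ * t)) 2 (volume.restrict (Set.Ioc 0 1)) :=
    MemLp.of_bound (by fun_prop) 1 (.of_forall fun t ↦ (norm_cexp_I_mul θ t).le)
  convert hasSum_sq_fourierCoeffOn zero_lt_one hL2 using 1
  · ext n
    rw [fourierCoeffOn_cexp_I_mul, norm_sq_integral_cexp_I_mul (sub_ne_zero.mpr (hθ n))]
  · simp [norm_cexp_I_mul]

/-- For every real `y` that is not an integer multiple of `2π`,
`Σ_{k∈ℤ} sin²((y+2kπ)/2)/(y+2kπ)² = 1/4`. -/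
theorem tsum_sin_sq_div_sq
    (y : ℝ) (hy : ∀ k : ℤ, y ≠ 2 * π * k) :
    ∑' k : ℤ, Real.sin ((y + 2 * k * π) / 2) ^ 2 / (y + 2 * k * π) ^ 2 = 1 / 4 := by
  rw [← (((Equiv.neg ℤ).hasSum_iff.mpr (hasSum_four_mul_sin_sq_div_sq hy)).div_const 4).tsum_eq]
  congr 1 with k
  simp only [Function.comp_apply, Equiv.neg_apply, Int.cast_neg]
  ring_nf
end

section
/- Let ε : ℕ → ℝ be a sequence that is monotone decreasing to zero (ε_{k+1} ≤ ε_k for all k, and ε_k → 0). Then there exists g ∈ L¹(ℝ) such that the function f(x) = ∫_ℝ e^{ixy} g(y) dy is real-valued and even, satisfies f(k) ≥ ε_k for every k ∈ ℕ, and ∫_0^∞ (ess sup_{|s| ≥ t} |g(s)|) dt < ∞ (so that f belongs to the algebra W₀*(ℝ)). -/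
/-!
Write `ε k = ∑_{n ≥ k} dₙ` with `dₙ = ε n - ε (n + 1) ≥ 0` and take
`g y = ∑ dₙ (n + 1) e^{-(n + 1)|y|}`. The Fourier transform of `e^{-a|y|}` is `2a / (a² + x²)`, so
`f x = ∑ dₙ · 2(n + 1)² / ((n + 1)² + x²)`, whose `n`-th term lies between `dₙ` and `2dₙ` as soon as
`|x| ≤ n + 1`; hence `f` is real and even, and `f k ≥ ∑_{n ≥ k} dₙ = ε k`. Since `g` is even and
decreasing in `|y|`, `ess sup_{|s| ≥ t} |g s| ≤ g t`, and `∫₀^∞ g ≤ ‖g‖₁ < ∞`.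
-/

open MeasureTheory Real Filter Set Complex

theorem MeasureTheory.integrable_tsum_of_summable_integral_norm {α ι E : Type*}
    [MeasurableSpace α] {μ : Measure α} [Countable ι] [NormedAddCommGroup E] [CompleteSpace E]
    [MeasurableSpace E] [BorelSpace E] [SecondCountableTopology E] {F : ι → α → E}
    (hF_int : ∀ i, Integrable (F i) μ) (hF_sum : Summable fun i ↦ ∫ a, ‖F i a‖ ∂μ) :
    Integrable (fun a ↦ ∑' i, F i a) μ := by
  refine ⟨(AEMeasurable.tsum fun i ↦ (hF_int i).aemeasurable).aestronglyMeasurable, ?_⟩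
  calc ∫⁻ a, ‖∑' i, F i a‖ₑ ∂μ ≤ ∫⁻ a, ∑' i, ‖F i a‖ₑ ∂μ :=
        lintegral_mono fun _ ↦ enorm_tsum_le_tsum_enorm
    _ = ∑' i, ENNReal.ofReal (∫ a, ‖F i a‖ ∂μ) := by
        rw [lintegral_tsum fun i ↦ (hF_int i).aestronglyMeasurable.enorm]
        simp_rw [ofReal_integral_norm_eq_lintegral_enorm (hF_int _)]
    _ = ENNReal.ofReal (∑' i, ∫ a, ‖F i a‖ ∂μ) :=
        (ENNReal.ofReal_tsum_of_nonneg (fun _ ↦ integral_nonneg fun _ ↦ norm_nonneg _) hF_sum).symm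
    _ < ⊤ := ENNReal.ofReal_lt_top

theorem Real.exp_neg_le_inv {u : ℝ} (hu : 0 < u) : rexp (-u) ≤ u⁻¹ := by
  rw [Real.exp_neg]
  exact inv_anti₀ hu (by linarith [add_one_le_exp u])

theorem hasSum_sub_succ_nat_add {ε : ℕ → ℝ} (hε : Antitone ε) (hlim : Tendsto ε atTop (nhds 0))
    (k : ℕ) : HasSum (fun n ↦ ε (n + k) - ε (n + k + 1)) (ε k) := by
  rw [hasSum_iff_tendsto_nat_of_nonneg (fun n ↦ sub_nonneg.2 (hε (Nat.le_succ _)))]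
  have hpartial : ∀ N, ∑ n ∈ Finset.range N, (ε (n + k) - ε (n + k + 1)) = ε k - ε (N + k) := by
    intro N
    simpa only [zero_add, Nat.add_right_comm] using
      Finset.sum_range_sub' (fun n ↦ ε (n + k)) N
  simp_rw [hpartial]
  have := tendsto_const_nhds (x := ε k) |>.sub (hlim.comp (tendsto_add_atTop_nat k))
  rwa [sub_zero] at this

theorem le_tsum_of_hasSum_nat_add {d w : ℕ → ℝ} {e : ℝ} {k : ℕ}
    (hd : HasSum (fun n ↦ d (n + k)) e) (hw : Summable w) (hw₀ : ∀ n, 0 ≤ w n)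
    (hdw : ∀ n, k ≤ n → d n ≤ w n) : e ≤ ∑' n, w n :=
  calc e = ∑' n, d (n + k) := hd.tsum_eq.symm
    _ ≤ ∑' n, w (n + k) :=
        hd.summable.tsum_le_tsum (fun n ↦ hdw _ (Nat.le_add_left k n))
          ((summable_nat_add_iff k).2 hw)
    _ ≤ ∑' n, w n := by
        rw [← hw.sum_add_tsum_nat_add k]
        exact le_add_of_nonneg_left (Finset.sum_nonneg fun n _ ↦ hw₀ n)

theorem lintegral_essSup_abs_ge_le_lintegral {E : Type*} [NormedAddCommGroup E] {g : ℝ → E}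
    (hg : ∀ s t, 0 < t → t ≤ |s| → ‖g s‖ ≤ ‖g t‖) :
    ∫⁻ t in Ioi (0 : ℝ), essSup (fun s ↦ (‖g s‖₊ : ENNReal)) (volume.restrict {s | t ≤ |s|})
      ≤ ∫⁻ t, ‖g t‖ₑ := by
  refine (setLIntegral_mono' measurableSet_Ioi fun t ht ↦ essSup_le_of_ae_le _ ?_).trans
    (setLIntegral_le_lintegral _ _)
  refine (ae_restrict_iff' (measurableSet_le measurable_const measurable_abs)).2 <|
    .of_forall fun s hs ↦ ?_
  simpa only [enorm_eq_nnnorm, ENNReal.coe_le_coe, ← NNReal.coe_le_coe, coe_nnnorm] using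
    hg s t ht hs

theorem mul_two_mul_div_sq_add_sq_le_two {a : ℝ} (ha : 0 < a) (x : ℝ) :
    a * (2 * a / (a ^ 2 + x ^ 2)) ≤ 2 := by
  rw [mul_div_assoc', div_le_iff₀ (by positivity)]
  nlinarith [sq_nonneg x]

theorem one_le_mul_two_mul_div_sq_add_sq {a x : ℝ} (ha : 0 < a) (hxa : |x| ≤ a) :
    1 ≤ a * (2 * a / (a ^ 2 + x ^ 2)) := by
  rw [mul_div_assoc', le_div_iff₀ (by positivity), one_mul, ← sq_abs x]
  nlinarith [abs_nonneg x]

theorem le_tsum_mul_two_mul_div_sq_add_sq {d : ℕ → ℝ} {e : ℝ} {k : ℕ} (hd : ∀ n, 0 ≤ d n)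
    (hd_sum : Summable d) (htail : HasSum (fun n ↦ d (n + k)) e) :
    e ≤ ∑' n : ℕ, d n * (n + 1) * (2 * (n + 1) / (((n : ℝ) + 1) ^ 2 + (k : ℝ) ^ 2)) := by
  simp_rw [mul_assoc]
  have hρ₀ : ∀ n : ℕ, 0 ≤ ((n : ℝ) + 1) * (2 * (n + 1) / (((n : ℝ) + 1) ^ 2 + (k : ℝ) ^ 2)) :=
    fun n ↦ by positivity
  have hρ_le : ∀ n : ℕ,
      d n * (((n : ℝ) + 1) * (2 * (n + 1) / (((n : ℝ) + 1) ^ 2 + (k : ℝ) ^ 2))) ≤ 2 * d n :=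
    fun n ↦ (mul_le_mul_of_nonneg_left (mul_two_mul_div_sq_add_sq_le_two n.cast_add_one_pos _)
      (hd n)).trans_eq (mul_comm _ _)
  refine le_tsum_of_hasSum_nat_add htail
    ((hd_sum.mul_left 2).of_nonneg_of_le (fun n ↦ mul_nonneg (hd n) (hρ₀ n)) hρ_le)
    (fun n ↦ mul_nonneg (hd n) (hρ₀ n)) fun n hkn ↦
      le_mul_of_one_le_right (hd n) (one_le_mul_two_mul_div_sq_add_sq n.cast_add_one_pos ?_)
  rw [Nat.abs_cast]
  exact_mod_cast hkn.trans n.le_succ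

theorem cexp_mul_exp_neg_mul_abs_of_nonpos (a x : ℝ) {y : ℝ} (hy : y ≤ 0) :
    cexp (I * x * y) * (rexp (-a * |y|) : ℂ) = cexp ((I * x + a) * y) := by
  rw [abs_of_nonpos hy, ofReal_exp, ← Complex.exp_add]
  push_cast
  ring_nf

theorem cexp_mul_exp_neg_mul_abs_of_nonneg (a x : ℝ) {y : ℝ} (hy : 0 ≤ y) :
    cexp (I * x * y) * (rexp (-a * |y|) : ℂ) = cexp ((I * x - a) * y) := by
  rw [abs_of_nonneg hy, ofReal_exp, ← Complex.exp_add]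
  push_cast
  ring_nf

theorem integrable_cexp_mul_exp_neg_mul_abs {a : ℝ} (ha : 0 < a) (x : ℝ) :
    Integrable (fun y : ℝ ↦ cexp (I * x * y) * (rexp (-a * |y|) : ℂ)) := by
  have hIic := (integrableOn_exp_mul_complex_Iic (a := I * x + a) (by simpa using ha) 0).congr_fun
    (fun y hy ↦ (cexp_mul_exp_neg_mul_abs_of_nonpos a x hy).symm) measurableSet_Iic
  have hIoi := (integrableOn_exp_mul_complex_Ioi (a := I * x - a) (by simpa using ha) 0).congr_fun
    (fun y hy ↦ (cexp_mul_exp_neg_mul_abs_of_nonneg a x (le_of_lt hy)).symm) measurableSet_Ioi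
  simpa [Iic_union_Ioi] using hIic.union hIoi

theorem integral_cexp_mul_exp_neg_mul_abs {a : ℝ} (ha : 0 < a) (x : ℝ) :
    ∫ y : ℝ, cexp (I * x * y) * (rexp (-a * |y|) : ℂ) = (2 * a / (a ^ 2 + x ^ 2) : ℝ) := by
  have hint := integrable_cexp_mul_exp_neg_mul_abs ha x
  have hIic : ∫ y in Iic (0 : ℝ), cexp (I * x * y) * (rexp (-a * |y|) : ℂ) = 1 / (I * x + a) := by
    rw [setIntegral_congr_fun measurableSet_Iic fun y hy ↦
      cexp_mul_exp_neg_mul_abs_of_nonpos a x hy,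
      integral_exp_mul_complex_Iic (by simpa using ha), ofReal_zero, mul_zero, Complex.exp_zero]
  have hIoi : ∫ y in Ioi (0 : ℝ), cexp (I * x * y) * (rexp (-a * |y|) : ℂ) = -1 / (I * x - a) := by
    rw [setIntegral_congr_fun measurableSet_Ioi fun y hy ↦
      cexp_mul_exp_neg_mul_abs_of_nonneg a x (le_of_lt hy),
      integral_exp_mul_complex_Ioi (by simpa using ha), ofReal_zero, mul_zero, Complex.exp_zero]
  have h₁ : I * x + a ≠ 0 := fun h ↦ by simpa [ha.ne'] using congrArg re h
  have h₂ : I * x - a ≠ 0 := fun h ↦ by simpa [ha.ne'] using congrArg re h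
  have h₃ : (a : ℂ) ^ 2 + x ^ 2 ≠ 0 := by exact_mod_cast (by positivity : a ^ 2 + x ^ 2 ≠ 0)
  rw [← intervalIntegral.integral_Iic_add_Ioi hint.integrableOn hint.integrableOn, hIic, hIoi]
  push_cast
  field_simp
  ring_nf
  rw [I_sq]
  ring

theorem norm_cexp_I_mul_mul_ofReal (x y r : ℝ) : ‖cexp (I * x * y) * r‖ = |r| := by
  simp [Complex.norm_exp]

theorem integrable_exp_neg_mul_abs {a : ℝ} (ha : 0 < a) :
    Integrable (fun y : ℝ ↦ rexp (-a * |y|)) :=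
  (integrable_cexp_mul_exp_neg_mul_abs ha 0).norm.congr <| .of_forall fun y ↦ by
    simp only [norm_cexp_I_mul_mul_ofReal, abs_of_pos (exp_pos _)]

theorem integral_exp_neg_mul_abs {a : ℝ} (ha : 0 < a) :
    ∫ y : ℝ, rexp (-a * |y|) = 2 / a := by
  have := integral_cexp_mul_exp_neg_mul_abs ha 0
  simp only [ofReal_zero, mul_zero, zero_mul, Complex.exp_zero, one_mul] at this
  rw [integral_complex_ofReal, ofReal_inj] at this
  rw [this, zero_pow two_ne_zero, add_zero, sq, mul_div_mul_right _ _ ha.ne']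

/-- Where the series diverges (possibly at `y = 0`), `tsum` gives the junk value `0`; this is
harmless since `{0}` is a null set. -/
noncomputable def expMixture (c a : ℕ → ℝ) (y : ℝ) : ℝ := ∑' n, c n * rexp (-a n * |y|)

namespace expMixture

variable {c a : ℕ → ℝ} (hc : ∀ n, 0 ≤ c n) (ha : ∀ n, 0 < a n)
  (hsum : Summable fun n ↦ c n / a n)
include hc ha hsum

theorem summable {y : ℝ} (hy : y ≠ 0) : Summable fun n ↦ c n * rexp (-a n * |y|) := by
  refine (hsum.mul_right |y|⁻¹).of_nonneg_of_le (fun n ↦ by have := hc n; positivity) fun n ↦ ?_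
  have hay : 0 < a n * |y| := mul_pos (ha n) (abs_pos.2 hy)
  calc c n * rexp (-a n * |y|) ≤ c n * (a n * |y|)⁻¹ :=
        mul_le_mul_of_nonneg_left (by simpa using Real.exp_neg_le_inv hay) (hc n)
    _ = c n / a n * |y|⁻¹ := by rw [mul_inv, div_eq_mul_inv, mul_assoc]

omit ha hsum in
theorem nonneg (y : ℝ) : 0 ≤ expMixture c a y :=
  tsum_nonneg fun n ↦ mul_nonneg (hc n) (exp_pos _).le

theorem le_of_le_abs {s t : ℝ} (ht : 0 < t) (hts : t ≤ |s|) :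
    expMixture c a s ≤ expMixture c a t := by
  refine (summable hc ha hsum (abs_pos.1 (ht.trans_le hts))).tsum_le_tsum (fun n ↦ ?_)
    (summable hc ha hsum ht.ne')
  refine mul_le_mul_of_nonneg_left (exp_le_exp.2 ?_) (hc n)
  rw [abs_of_pos ht]
  exact mul_le_mul_of_nonpos_left hts (neg_nonpos.2 (ha n).le)

theorem integrable : Integrable (expMixture c a) := by
  refine integrable_tsum_of_summable_integral_norm
    (fun n ↦ (integrable_exp_neg_mul_abs (ha n)).const_mul (c n)) ?_
  refine (hsum.mul_left 2).congr fun n ↦ ?_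
  simp_rw [Real.norm_eq_abs, abs_mul, abs_of_nonneg (hc n), abs_of_pos (exp_pos _),
    integral_const_mul, integral_exp_neg_mul_abs (ha n)]
  ring

theorem integral_cexp_mul (x : ℝ) :
    ∫ y : ℝ, cexp (I * x * y) * expMixture c a y
      = ((∑' n, c n * (2 * a n / (a n ^ 2 + x ^ 2)) : ℝ) : ℂ) := by
  have hterm : ∀ n (y : ℝ), cexp (I * x * y) * ((c n * rexp (-a n * |y|) : ℝ) : ℂ)
      = c n * (cexp (I * x * y) * (rexp (-a n * |y|) : ℂ)) := fun n y ↦ by push_cast; ring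
  have hint : ∀ n, Integrable fun y : ℝ ↦ cexp (I * x * y) * ((c n * rexp (-a n * |y|) : ℝ) : ℂ) :=
    fun n ↦ by simpa only [hterm] using (integrable_cexp_mul_exp_neg_mul_abs (ha n) x).const_mul _
  have hnorm : Summable fun n ↦
      ∫ y : ℝ, ‖cexp (I * x * y) * ((c n * rexp (-a n * |y|) : ℝ) : ℂ)‖ := by
    refine (hsum.mul_left 2).congr fun n ↦ ?_
    simp_rw [norm_cexp_I_mul_mul_ofReal, abs_mul, abs_of_nonneg (hc n), abs_of_pos (exp_pos _),
      integral_const_mul, integral_exp_neg_mul_abs (ha n)]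
    ring
  calc ∫ y : ℝ, cexp (I * x * y) * expMixture c a y
      = ∫ y : ℝ, ∑' n, cexp (I * x * y) * ((c n * rexp (-a n * |y|) : ℝ) : ℂ) := by
        simp_rw [expMixture, ofReal_tsum, tsum_mul_left]
    _ = ∑' n, ∫ y : ℝ, cexp (I * x * y) * ((c n * rexp (-a n * |y|) : ℝ) : ℂ) :=
        (integral_tsum_of_summable_integral_norm hint hnorm).symm
    _ = _ := by
        simp_rw [hterm, integral_const_mul, integral_cexp_mul_exp_neg_mul_abs (ha _), ofReal_tsum]
        push_cast
        rfl

end expMixture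

/-- Theorem P2, part 2: For every sequence `ε_k` monotone decreasing to
zero there is `g ∈ L¹(ℝ)` whose Fourier transform `f` is real-valued, even, satisfies
`f(k) ≥ ε_k` for all `k ∈ ℕ`, and `∫_0^∞ ess sup_{|s|≥t} |g(s)| dt < ∞`
(so `f ∈ W₀*(ℝ)`). -/
theorem exists_W0star_dominating_sequence
    (ε : ℕ → ℝ) (hmono : ∀ k : ℕ, ε (k + 1) ≤ ε k)
    (hlim : Tendsto ε atTop (nhds 0)) :
    ∃ g : ℝ → ℂ, Integrable g ∧
      (∀ x : ℝ, (∫ y : ℝ, Complex.exp (Complex.I * x * y) * g y).im = 0) ∧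
      (∀ x : ℝ, (∫ y : ℝ, Complex.exp (Complex.I * (-x) * y) * g y)
        = ∫ y : ℝ, Complex.exp (Complex.I * x * y) * g y) ∧
      (∀ k : ℕ, ε k ≤ (∫ y : ℝ, Complex.exp (Complex.I * k * y) * g y).re) ∧
      (∫⁻ t in Set.Ioi (0 : ℝ),
        essSup (fun s : ℝ => (‖g s‖₊ : ENNReal)) (volume.restrict {s : ℝ | t ≤ |s|})) < ⊤ := by
  set d : ℕ → ℝ := fun n ↦ ε n - ε (n + 1)
  have hd : ∀ n, 0 ≤ d n := fun n ↦ sub_nonneg.2 (hmono n)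
  have htail : ∀ k, HasSum (fun n ↦ d (n + k)) (ε k) :=
    hasSum_sub_succ_nat_add (antitone_nat_of_succ_le hmono) hlim
  have hd_sum : Summable d := (htail 0).summable
  have hc : ∀ n : ℕ, 0 ≤ d n * (n + 1) := fun n ↦ mul_nonneg (hd n) n.cast_add_one_pos.le
  have ha : ∀ n : ℕ, (0 : ℝ) < n + 1 := fun n ↦ n.cast_add_one_pos
  have hsum : Summable fun n : ℕ ↦ d n * (n + 1) / (n + 1) := by
    simpa only [mul_div_cancel_right₀ _ (ha _).ne'] using hd_sum
  have hf := expMixture.integral_cexp_mul hc ha hsum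
  have hg := expMixture.integrable hc ha hsum
  refine ⟨fun y ↦ expMixture _ _ y, hg.ofReal, fun x ↦ by rw [hf, ofReal_im],
    fun x ↦ by rw [← ofReal_neg, hf, hf, neg_sq], fun k ↦ ?_, ?_⟩
  · rw [← ofReal_natCast, hf, ofReal_re]
    exact le_tsum_mul_two_mul_div_sq_add_sq hd hd_sum (htail k)
  · refine (lintegral_essSup_abs_ge_le_lintegral fun s t ht hts ↦ ?_).trans_lt
      hg.ofReal.hasFiniteIntegral
    simp_rw [norm_real, norm_of_nonneg (expMixture.nonneg hc _)]
    exact expMixture.le_of_le_abs hc ha hsum ht hts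
end

section
/- Let μ be a finite (positive) Borel measure on ℝ and let f(x) = ∫_ℝ e^{-ixt} dμ(t). Then for every x ∈ ℝ, the improper integral ∫_{δ}^{M} (f(x+u) − f(x−u)) / u du converges as δ → 0⁺ and M → ∞ to −πi ∫_ℝ e^{-ixt} sign(t) dμ(t), and moreover there is an absolute constant C such that sup over all x ∈ ℝ and all 0 < δ < M of |∫_{δ}^{M} (f(x+u) − f(x−u))/u du| ≤ C · μ(ℝ). -/
/-!
Expanding `f` and applying Fubini,
`∫_δ^M (f(x+u) - f(x-u))/u du = -2i ∫ e^{-ixt} (Si(Mt) - Si(δt)) dμ(t)`, where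
`Si y = ∫_0^y sin u / u du` is the sine integral. `Si` is bounded (by 3) and tends to `±π/2` at
`±∞`; this gives the uniform bound `12 μ(ℝ)` and, by dominated convergence, the limit. The limit
of `Si` is Dirichlet's integral, computed from `sin x / x = ∫_0^∞ e^{-xy} sin x dy` and Fubini,
which also shows `|Si M - π/2| ≤ 2/M`.
-/

open MeasureTheory Real Filter Set Topology

noncomputable def sineIntegral (y : ℝ) : ℝ := ∫ u in 0..y, sinc u

lemma intervalIntegrable_sinc (a b : ℝ) : IntervalIntegrable sinc volume a b :=
  continuous_sinc.intervalIntegrable a b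

@[fun_prop]
lemma continuous_sineIntegral : Continuous sineIntegral :=
  intervalIntegral.continuous_primitive intervalIntegrable_sinc 0

@[simp] lemma sineIntegral_zero : sineIntegral 0 = 0 := by simp [sineIntegral]

lemma sineIntegral_neg (y : ℝ) : sineIntegral (-y) = -sineIntegral y := by
  have h := intervalIntegral.integral_comp_neg (a := 0) (b := -y) sinc
  simp only [sinc_neg, neg_neg, neg_zero] at h
  rw [sineIntegral, h, intervalIntegral.integral_symm, sineIntegral]

lemma abs_sineIntegral_le_abs (y : ℝ) : |sineIntegral y| ≤ |y| := by
  simpa [sineIntegral] using intervalIntegral.norm_integral_le_of_norm_le_const (a := 0) (b := y)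
    (C := 1) fun u _ => (Real.norm_eq_abs _).trans_le (abs_sinc_le_one u)

lemma sineIntegral_sub_sineIntegral (a b : ℝ) :
    sineIntegral b - sineIntegral a = ∫ u in a..b, sinc u :=
  intervalIntegral.integral_interval_sub_left (intervalIntegrable_sinc 0 b)
    (intervalIntegrable_sinc 0 a)

lemma integral_exp_neg_mul_mul_sin (y M : ℝ) :
    ∫ x in 0..M, exp (-x * y) * sin x
      = (1 - exp (-M * y) * (y * sin M + cos M)) / (1 + y ^ 2) := by
  have hy : 1 + y ^ 2 ≠ 0 := by positivity
  have hderiv : ∀ x : ℝ, HasDerivAt (fun x => -(exp (-x * y) * (y * sin x + cos x)) / (1 + y ^ 2))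
      (exp (-x * y) * sin x) x := by
    intro x
    have hexp : HasDerivAt (fun x : ℝ => exp (-x * y)) (exp (-x * y) * -y) x := by
      simpa using ((hasDerivAt_id x).neg.mul_const y).exp
    have htrig : HasDerivAt (fun x => y * sin x + cos x) (y * cos x + -sin x) x :=
      ((hasDerivAt_sin x).const_mul y).add (hasDerivAt_cos x)
    refine (((hexp.mul htrig).neg).div_const (1 + y ^ 2)).congr_deriv ?_
    rw [div_eq_iff hy]
    ring
  rw [intervalIntegral.integral_eq_sub_of_hasDerivAt (fun x _ => hderiv x)
    ((by fun_prop : Continuous fun x => exp (-x * y) * sin x).intervalIntegrable _ _)]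
  simp only [neg_mul, neg_zero, zero_mul, exp_zero, sin_zero, mul_zero, cos_zero, zero_add, mul_one]
  ring

lemma integral_exp_neg_mul_Ioi {x : ℝ} (hx : 0 < x) : ∫ y in Ioi 0, exp (-x * y) = x⁻¹ := by
  rw [integral_exp_mul_Ioi (neg_neg_of_pos hx)]
  simp

lemma integrable_exp_neg_mul_mul_sin_prod (M : ℝ) :
    Integrable (Function.uncurry fun x y : ℝ => exp (-x * y) * sin x)
      ((volume.restrict (Ioc 0 M)).prod (volume.restrict (Ioi 0))) := by
  have hmeas : AEStronglyMeasurable (Function.uncurry fun x y : ℝ => exp (-x * y) * sin x)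
      ((volume.restrict (Ioc 0 M)).prod (volume.restrict (Ioi 0))) := by
    apply Continuous.aestronglyMeasurable
    fun_prop
  refine (integrable_prod_iff hmeas).2 ⟨?_, ?_⟩
  · filter_upwards [ae_restrict_mem measurableSet_Ioc] with x hx
    exact (integrableOn_exp_mul_Ioi (neg_neg_of_pos hx.1) 0).mul_const (sin x)
  · refine Integrable.mono' (integrable_const 1) hmeas.norm.integral_prod_right' ?_
    filter_upwards [ae_restrict_mem measurableSet_Ioc] with x hx
    simp only [Function.uncurry_apply_pair, Real.norm_eq_abs, abs_mul, abs_exp]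
    rw [integral_mul_const, integral_exp_neg_mul_Ioi hx.1,
      abs_of_nonneg (mul_nonneg (inv_nonneg.2 hx.1.le) (abs_nonneg _)), inv_mul_le_one₀ hx.1]
    exact (abs_sin_le_abs).trans_eq (abs_of_pos hx.1)

lemma sineIntegral_eq_integral_Ioi_integral {M : ℝ} (hM : 0 ≤ M) :
    sineIntegral M = ∫ y in Ioi 0, ∫ x in 0..M, exp (-x * y) * sin x := by
  have hsinc : ∀ x ∈ Ioc 0 M, sinc x = ∫ y in Ioi 0, exp (-x * y) * sin x := fun x hx => by
    rw [integral_mul_const, integral_exp_neg_mul_Ioi hx.1, sinc_of_ne_zero hx.1.ne',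
      inv_mul_eq_div]
  simp_rw [intervalIntegral.integral_of_le hM]
  rw [sineIntegral, intervalIntegral.integral_of_le hM,
    setIntegral_congr_fun measurableSet_Ioc hsinc]
  exact integral_integral_swap (integrable_exp_neg_mul_mul_sin_prod M)

lemma abs_exp_neg_mul_mul_div_le (M : ℝ) {y : ℝ} (hy : 0 ≤ y) :
    |exp (-M * y) * (y * sin M + cos M) / (1 + y ^ 2)| ≤ 2 * exp (-M * y) := by
  have htrig : |y * sin M + cos M| ≤ y + 1 := by
    calc |y * sin M + cos M| ≤ y * |sin M| + |cos M| := by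
          simpa [abs_mul, abs_of_nonneg hy] using abs_add_le (y * sin M) (cos M)
      _ ≤ y * 1 + 1 := by gcongr <;> [exact abs_sin_le_one M; exact abs_cos_le_one M]
      _ = y + 1 := by ring
  rw [abs_div, abs_mul, abs_exp, abs_of_pos (by positivity : (0 : ℝ) < 1 + y ^ 2),
    div_le_iff₀ (by positivity)]
  calc exp (-M * y) * |y * sin M + cos M| ≤ exp (-M * y) * (y + 1) := by gcongr
    _ ≤ 2 * exp (-M * y) * (1 + y ^ 2) := by
        nlinarith [exp_pos (-M * y), sq_nonneg (y - 1)]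

lemma abs_sineIntegral_sub_pi_div_two_le {M : ℝ} (hM : 0 < M) :
    |sineIntegral M - π / 2| ≤ 2 / M := by
  set r : ℝ → ℝ := fun y => exp (-M * y) * (y * sin M + cos M) / (1 + y ^ 2)
  have hexp : IntegrableOn (fun y => 2 * exp (-M * y)) (Ioi 0) :=
    (integrableOn_exp_mul_Ioi (neg_neg_of_pos hM) 0).const_mul 2
  have hr : IntegrableOn r (Ioi 0) :=
    hexp.mono' (by fun_prop) <| (ae_restrict_mem measurableSet_Ioi).mono fun y hy =>
      abs_exp_neg_mul_mul_div_le M (le_of_lt hy)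
  have hSi : sineIntegral M = π / 2 - ∫ y in Ioi 0, r y := by
    rw [sineIntegral_eq_integral_Ioi_integral hM.le]
    simp_rw [integral_exp_neg_mul_mul_sin, sub_div, one_div]
    rw [integral_sub integrable_inv_one_add_sq.integrableOn hr, integral_Ioi_inv_one_add_sq,
      arctan_zero, sub_zero]
  calc |sineIntegral M - π / 2| = |∫ y in Ioi 0, r y| := by rw [hSi, sub_sub_cancel_left, abs_neg]
    _ ≤ ∫ y in Ioi 0, |r y| := abs_integral_le_integral_abs
    _ ≤ ∫ y in Ioi 0, 2 * exp (-M * y) :=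
        setIntegral_mono_on hr.abs hexp measurableSet_Ioi fun y hy =>
          abs_exp_neg_mul_mul_div_le M (le_of_lt hy)
    _ = 2 / M := by rw [integral_const_mul, integral_exp_neg_mul_Ioi hM, div_eq_mul_inv]

lemma tendsto_sineIntegral_atTop : Tendsto sineIntegral atTop (𝓝 (π / 2)) := by
  refine tendsto_iff_norm_sub_tendsto_zero.2 <|
    squeeze_zero_norm' ?_ (tendsto_const_nhds.div_atTop tendsto_id (a := (2 : ℝ)))
  filter_upwards [eventually_gt_atTop 0] with M hM
  simpa using abs_sineIntegral_sub_pi_div_two_le hM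

lemma abs_sineIntegral_le_three (y : ℝ) : |sineIntegral y| ≤ 3 := by
  wlog hy : 0 ≤ y generalizing y
  · simpa [sineIntegral_neg] using this (-y) (by linarith)
  rcases le_or_gt y 2 with hy2 | hy2
  · exact (abs_sineIntegral_le_abs y).trans (by rw [abs_of_nonneg hy]; linarith)
  · have hnear := abs_sineIntegral_sub_pi_div_two_le (by linarith : 0 < y)
    have h2y : 2 / y ≤ 1 := (div_le_one (by linarith)).2 hy2.le
    have := abs_sub_abs_le_abs_sub (sineIntegral y) (π / 2)
    rw [abs_of_pos (by positivity : 0 < π / 2)] at this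
    linarith [pi_lt_four]

lemma sin_mul_div_eq_mul_sinc (t : ℝ) {u : ℝ} (hu : u ≠ 0) :
    sin (u * t) / u = t * sinc (u * t) := by
  rcases eq_or_ne t 0 with rfl | ht
  · simp
  · rw [sinc_of_ne_zero (mul_ne_zero hu ht)]
    field_simp

lemma integral_sin_mul_div (t : ℝ) {δ M : ℝ} (hδ : 0 < δ) (hδM : δ ≤ M) :
    ∫ u in δ..M, sin (u * t) / u = sineIntegral (M * t) - sineIntegral (δ * t) := by
  have hpos : ∀ u ∈ uIcc δ M, sin (u * t) / u = t * sinc (u * t) := fun u hu =>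
    sin_mul_div_eq_mul_sinc t (hδ.trans_le (uIcc_of_le hδM ▸ hu).1).ne'
  rw [intervalIntegral.integral_congr hpos, intervalIntegral.integral_const_mul, ← smul_eq_mul,
    intervalIntegral.smul_integral_comp_mul_right, sineIntegral_sub_sineIntegral]

lemma tendsto_sineIntegral_mul_atTop (t : ℝ) :
    Tendsto (fun M => sineIntegral (M * t)) atTop (𝓝 (π / 2 * sign t)) := by
  rcases lt_trichotomy t 0 with ht | rfl | ht
  · have h := (tendsto_sineIntegral_atTop.comp (tendsto_id.atTop_mul_const (neg_pos.2 ht))).neg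
    rw [sign_of_neg ht, mul_neg_one]
    refine h.congr fun M => ?_
    simp [← sineIntegral_neg]
  · simp
  · rw [sign_of_pos ht, mul_one]
    exact tendsto_sineIntegral_atTop.comp (tendsto_id.atTop_mul_const ht)

lemma tendsto_sineIntegral_mul_sub (t : ℝ) :
    Tendsto (fun p : ℝ × ℝ => sineIntegral (p.2 * t) - sineIntegral (p.1 * t))
      (𝓝[>] 0 ×ˢ atTop) (𝓝 (π / 2 * sign t)) := by
  have hδ : Tendsto (fun δ => sineIntegral (δ * t)) (𝓝[>] 0) (𝓝 0) := by
    refine ((continuous_sineIntegral.comp (continuous_mul_const t)).tendsto' 0 0 ?_).mono_left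
      nhdsWithin_le_nhds
    simp
  simpa using ((tendsto_sineIntegral_mul_atTop t).comp tendsto_snd).sub (hδ.comp tendsto_fst)

open Complex in
lemma cexp_neg_mul_I_sub_cexp_mul_I (z : ℂ) : cexp (-z * I) - cexp (z * I) = -2 * I * sin z := by
  rw [Complex.sin]
  linear_combination (cexp (-z * I) - cexp (z * I)) * I_sq

lemma norm_cexp_neg_I_mul_mul (x t : ℝ) : ‖Complex.exp (-(Complex.I * x * t))‖ = 1 := by
  rw [show -(Complex.I * x * t) = ((-(x * t) : ℝ) : ℂ) * Complex.I by push_cast; ring]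
  exact Complex.norm_exp_ofReal_mul_I _

lemma measurable_cexp_neg_I_mul_mul (x : ℝ) :
    Measurable fun t : ℝ => Complex.exp (-(Complex.I * x * t)) := by
  fun_prop

lemma norm_cexp_mul_sineIntegral_sub_le (x t a b : ℝ) :
    ‖Complex.exp (-(Complex.I * x * t)) * (-2 * Complex.I)
      * ((sineIntegral b - sineIntegral a : ℝ) : ℂ)‖ ≤ 12 := by
  have hsub : |sineIntegral b - sineIntegral a| ≤ 6 := by
    linarith [abs_sub (sineIntegral b) (sineIntegral a), abs_sineIntegral_le_three a,
      abs_sineIntegral_le_three b]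
  simp only [norm_mul, norm_cexp_neg_I_mul_mul, Complex.norm_real, Real.norm_eq_abs, norm_neg,
    Complex.norm_ofNat, Complex.norm_I]
  linarith

noncomputable def fourierStieltjes (μ : Measure ℝ) (x : ℝ) : ℂ :=
  ∫ t, Complex.exp (-(Complex.I * x * t)) ∂μ

section fourierStieltjes

variable (μ : Measure ℝ) [IsFiniteMeasure μ]

lemma integrable_cexp_neg_I_mul_mul (x : ℝ) :
    Integrable (fun t : ℝ => Complex.exp (-(Complex.I * x * t))) μ :=
  .of_bound (measurable_cexp_neg_I_mul_mul x).aestronglyMeasurable 1 <|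
    ae_of_all _ fun t => (norm_cexp_neg_I_mul_mul x t).le

-- At `u = 0` both sides are junk values `0`, so no hypothesis `u ≠ 0` is needed.
lemma fourierStieltjes_sub_div (x u : ℝ) :
    (fourierStieltjes μ (x + u) - fourierStieltjes μ (x - u)) / u
      = ∫ t, Complex.exp (-(Complex.I * x * t)) * (-2 * Complex.I)
          * ((sin (u * t) / u : ℝ) : ℂ) ∂μ := by
  rw [fourierStieltjes, fourierStieltjes, ← integral_sub (integrable_cexp_neg_I_mul_mul μ _)
    (integrable_cexp_neg_I_mul_mul μ _), ← integral_div]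
  refine integral_congr_ae (ae_of_all _ fun t => ?_)
  have hshift : ∀ s : ℝ, Complex.exp (-(Complex.I * ↑(x + s) * t))
      = Complex.exp (-(Complex.I * x * t)) * Complex.exp (-((s * t : ℝ) : ℂ) * Complex.I) := by
    intro s
    rw [← Complex.exp_add]
    push_cast
    ring_nf
  dsimp only
  rw [sub_eq_add_neg x u, hshift, hshift, ← mul_sub, neg_mul u t, Complex.ofReal_neg, neg_neg,
    cexp_neg_mul_I_sub_cexp_mul_I, ← Complex.ofReal_sin]
  push_cast
  ring

lemma integrable_cexp_mul_sin_mul_div_prod (x : ℝ) {δ : ℝ} (hδ : 0 < δ) (M : ℝ) :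
    Integrable (Function.uncurry fun u t : ℝ =>
      Complex.exp (-(Complex.I * x * t)) * (-2 * Complex.I) * ((sin (u * t) / u : ℝ) : ℂ))
      ((volume.restrict (Ioc δ M)).prod μ) := by
  refine .of_bound (by unfold Function.uncurry; fun_prop) (2 / δ) <|
    (Measure.quasiMeasurePreserving_fst.ae (ae_restrict_mem measurableSet_Ioc)).mono
      fun ⟨u, t⟩ hu => ?_
  have hsin : |sin (u * t) / u| ≤ 1 / δ := by
    rw [abs_div, abs_of_pos (hδ.trans hu.1)]
    exact div_le_div₀ zero_le_one (abs_sin_le_one _) hδ hu.1.le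
  simp only [Function.uncurry_apply_pair, norm_mul, norm_cexp_neg_I_mul_mul, Complex.norm_real,
    Real.norm_eq_abs, norm_neg, Complex.norm_ofNat, Complex.norm_I]
  linarith [show 2 / δ = 2 * (1 / δ) by ring]

lemma integral_fourierStieltjes_sub_div (x : ℝ) {δ M : ℝ} (hδ : 0 < δ) (hδM : δ ≤ M) :
    ∫ u in δ..M, (fourierStieltjes μ (x + u) - fourierStieltjes μ (x - u)) / u
      = ∫ t, Complex.exp (-(Complex.I * x * t)) * (-2 * Complex.I)
          * ((sineIntegral (M * t) - sineIntegral (δ * t) : ℝ) : ℂ) ∂μ := by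
  simp_rw [fourierStieltjes_sub_div, intervalIntegral.integral_of_le hδM]
  rw [integral_integral_swap (integrable_cexp_mul_sin_mul_div_prod μ x hδ M)]
  refine integral_congr_ae (ae_of_all _ fun t => ?_)
  dsimp only
  rw [integral_const_mul, integral_complex_ofReal, ← intervalIntegral.integral_of_le hδM,
    integral_sin_mul_div t hδ hδM]

lemma norm_integral_fourierStieltjes_sub_div_le (x : ℝ) {δ M : ℝ} (hδ : 0 < δ) (hδM : δ ≤ M) :
    ‖∫ u in δ..M, (fourierStieltjes μ (x + u) - fourierStieltjes μ (x - u)) / u‖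
      ≤ 12 * μ.real univ := by
  rw [integral_fourierStieltjes_sub_div μ x hδ hδM]
  exact norm_integral_le_of_norm_le_const <| ae_of_all _ fun t =>
    norm_cexp_mul_sineIntegral_sub_le x t _ _

lemma tendsto_integral_fourierStieltjes_sub_div (x : ℝ) :
    Tendsto (fun p : ℝ × ℝ => ∫ u in p.1..p.2,
        (fourierStieltjes μ (x + u) - fourierStieltjes μ (x - u)) / u)
      (𝓝[>] 0 ×ˢ atTop)
      (𝓝 (-(π : ℂ) * Complex.I *
        ∫ t, Complex.exp (-(Complex.I * x * t)) * ((sign t : ℝ) : ℂ) ∂μ)) := by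
  have hlimit :
      -(π : ℂ) * Complex.I * ∫ t, Complex.exp (-(Complex.I * x * t)) * ((sign t : ℝ) : ℂ) ∂μ
        = ∫ t, Complex.exp (-(Complex.I * x * t)) * (-2 * Complex.I)
            * ((π / 2 * sign t : ℝ) : ℂ) ∂μ := by
    rw [← integral_const_mul]
    refine integral_congr_ae (ae_of_all _ fun t => ?_)
    push_cast
    ring
  have hdom : Tendsto (fun p : ℝ × ℝ => ∫ t, Complex.exp (-(Complex.I * x * t)) * (-2 * Complex.I)
        * ((sineIntegral (p.2 * t) - sineIntegral (p.1 * t) : ℝ) : ℂ) ∂μ) (𝓝[>] 0 ×ˢ atTop)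
      (𝓝 (∫ t, Complex.exp (-(Complex.I * x * t)) * (-2 * Complex.I)
        * ((π / 2 * sign t : ℝ) : ℂ) ∂μ)) := by
    refine tendsto_integral_filter_of_dominated_convergence (fun _ => 12)
      (Eventually.of_forall fun p => ?_) (Eventually.of_forall fun p => ae_of_all _ fun t =>
        norm_cexp_mul_sineIntegral_sub_le x t _ _) (integrable_const _) (ae_of_all _ fun t => ?_)
    · exact Continuous.aestronglyMeasurable (by fun_prop)
    · exact ((Complex.continuous_ofReal.tendsto _).comp
        (tendsto_sineIntegral_mul_sub t)).const_mul _
  have hinterval : ∀ᶠ p : ℝ × ℝ in 𝓝[>] 0 ×ˢ atTop, 0 < p.1 ∧ p.1 ≤ p.2 := by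
    filter_upwards [tendsto_fst.eventually self_mem_nhdsWithin,
      tendsto_fst.eventually
        (eventually_nhdsWithin_of_eventually_nhds (eventually_lt_nhds one_pos)),
      tendsto_snd.eventually (eventually_ge_atTop 1)] with p hpos hlt hge
    exact ⟨hpos, by linarith⟩
  rw [hlimit]
  refine hdom.congr' ?_
  filter_upwards [hinterval] with p hp
  exact (integral_fourierStieltjes_sub_div μ x hp.1 hp.2).symm

end fourierStieltjes

/-- Lemma 1: For `f(x) = ∫ e^{-ixt} dμ(t)` with `μ` a finite positive
measure, the improper integral `∫_{→0}^{→∞} (f(x+u) - f(x-u))/u du` converges to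
`-πi ∫ e^{-ixt} sign(t) dμ(t)` for every `x`, and the truncated integrals are
uniformly bounded by an absolute constant times `μ(ℝ)`. -/
theorem hilbert_type_integral_of_fourier_stieltjes :
    ∃ C : ℝ, 0 < C ∧ ∀ (μ : Measure ℝ), IsFiniteMeasure μ →
      ∀ f : ℝ → ℂ, (∀ x : ℝ, f x = ∫ t : ℝ, Complex.exp (-(Complex.I * x * t)) ∂μ) →
        (∀ x : ℝ,
          Tendsto (fun p : ℝ × ℝ => ∫ u in p.1..p.2, (f (x + u) - f (x - u)) / (u : ℂ))
            ((nhdsWithin 0 (Set.Ioi 0)) ×ˢ atTop)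
            (nhds (-(π : ℂ) * Complex.I *
              ∫ t : ℝ, Complex.exp (-(Complex.I * x * t)) * ((Real.sign t : ℝ) : ℂ) ∂μ))) ∧
        (∀ x δ M : ℝ, 0 < δ → δ < M →
          ‖∫ u in δ..M, (f (x + u) - f (x - u)) / (u : ℂ)‖ ≤ C * (μ Set.univ).toReal) := by
  refine ⟨12, by norm_num, fun μ _ f hf => ?_⟩
  obtain rfl : f = fourierStieltjes μ := funext hf
  exact ⟨tendsto_integral_fourierStieltjes_sub_div μ, fun x δ M hδ hδM =>
    norm_integral_fourierStieltjes_sub_div_le μ x hδ hδM.le⟩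
end

section
/- There exists a sequence b : ℕ → ℝ with b_k ≥ 0 for all k and Σ_{k=1}^∞ b_k < ∞, such that the function f₁(u) = Σ_{k=1}^∞ b_k sin(k u) (which belongs to the Wiener algebra W(ℝ), with ‖f₁‖_W ≤ Σ b_k) satisfies ∫_0^1 |f₁(u)| / u du = ∞. Consequently, the improper integral in the odd-part Hilbert-transform bound need not converge absolutely for functions of W(ℝ). -/
/-!
Take the lacunary series `f(u) = ∑ⱼ wⱼ sin(nⱼ u)` with `wⱼ = 100⁻ʲ` and `nⱼ₊₁ = 1600 nⱼ Gⱼ`, where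
`log Gⱼ ≥ 4 · 100ʲ⁺¹ + 2`. On the window `(1/nⱼ₊₁, 1/(1600 nⱼ)]` the term of frequency `nⱼ₊₁`
dominates: since `|sin x| ≤ |x|` the earlier terms add up to at most
`∑_{m ≤ j} wₘ nₘ u ≤ 2 wⱼ nⱼ u ≤ wⱼ₊₁/8`, and since `w` is geometric the later ones add up to at
most `wⱼ₊₁/8`. Hence `|f(u)| ≥ wⱼ₊₁ (sin²(nⱼ₊₁ u) - 1/4)`. Now `sin² - 1/4 = 1/4 - cos(2·)/2`, and
integration by parts shows that the cosine contributes `O(1)` to `∫ · du/u`, so each window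
contributes at least `wⱼ₊₁ (log Gⱼ / 4 - 1/2) ≥ 1` to `∫₀¹ |f(u)| du/u`.
-/

open MeasureTheory Real Set
open scoped ENNReal

theorem integral_inv_sq_of_pos {a c : ℝ} (ha : 0 < a) (hac : a ≤ c) :
    ∫ u in a..c, (u ^ 2)⁻¹ = a⁻¹ - c⁻¹ := by
  have h0 : (0 : ℝ) ∉ uIcc a c := by
    rw [uIcc_of_le hac]; exact fun h => ha.not_ge h.1
  have := integral_zpow (a := a) (b := c) (n := -2) (Or.inr ⟨by norm_num, h0⟩)
  simp only [zpow_neg, zpow_ofNat] at this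
  rw [this]; norm_num; ring

theorem abs_integral_cos_mul_div_le {M a c : ℝ} (hM : 0 < M) (ha : 0 < a) (hac : a ≤ c) :
    |∫ u in a..c, cos (M * u) / u| ≤ 2 / (M * a) := by
  have hpos : ∀ x ∈ uIcc a c, 0 < x := fun x hx =>
    ha.trans_le (uIcc_of_le hac ▸ hx).1
  have hinvsq : ContinuousOn (fun x : ℝ => (x ^ 2)⁻¹) (uIcc a c) :=
    (continuousOn_id.pow 2).inv₀ fun x hx => pow_ne_zero 2 (hpos x hx).ne'
  have hsin : ∀ x ∈ uIcc a c, HasDerivAt (fun y => sin (M * y) / M) (cos (M * x)) x := by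
    intro x _
    simpa [mul_div_cancel_right₀ _ hM.ne'] using
      (((hasDerivAt_id x).const_mul M).sin).div_const M
  have ibp := intervalIntegral.integral_mul_deriv_eq_deriv_mul
    (fun x hx => hasDerivAt_inv (hpos x hx).ne') hsin hinvsq.neg.intervalIntegrable
    ((by fun_prop : Continuous fun x => cos (M * x)).intervalIntegrable _ _)
  have hsin_div : ∀ x, |sin x / M| ≤ M⁻¹ := fun x => by
    rw [abs_div, abs_of_pos hM, div_eq_mul_inv]
    exact mul_le_of_le_one_left (by positivity) (abs_sin_le_one x)
  have hbdry : ∀ x, 0 < x → |x⁻¹ * (sin (M * x) / M)| ≤ (M * x)⁻¹ := fun x hx => by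
    rw [abs_mul, abs_of_pos (inv_pos.2 hx), mul_inv, mul_comm M⁻¹]
    exact mul_le_mul_of_nonneg_left (hsin_div _) (by positivity)
  have hrem : |∫ x in a..c, -(x ^ 2)⁻¹ * (sin (M * x) / M)| ≤ (a⁻¹ - c⁻¹) / M := by
    rw [← Real.norm_eq_abs, ← integral_inv_sq_of_pos ha hac,
      div_eq_mul_inv (∫ x in a..c, (x ^ 2)⁻¹), ← intervalIntegral.integral_mul_const (𝕜 := ℝ)]
    refine intervalIntegral.norm_integral_le_of_norm_le hac (ae_of_all _ fun x _ => ?_)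
      (hinvsq.mul continuousOn_const).intervalIntegrable
    rw [norm_mul, norm_neg, norm_inv, norm_pow, Real.norm_eq_abs, Real.norm_eq_abs, sq_abs]
    exact mul_le_mul_of_nonneg_left (hsin_div _) (by positivity)
  calc |∫ u in a..c, cos (M * u) / u|
      = |c⁻¹ * (sin (M * c) / M) - a⁻¹ * (sin (M * a) / M)
          - ∫ x in a..c, -(x ^ 2)⁻¹ * (sin (M * x) / M)| := by
        rw [← ibp]; simp only [div_eq_inv_mul]
    _ ≤ |c⁻¹ * (sin (M * c) / M)| + |a⁻¹ * (sin (M * a) / M)|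
          + |∫ x in a..c, -(x ^ 2)⁻¹ * (sin (M * x) / M)| :=
        (abs_sub _ _).trans (by gcongr; exact abs_sub _ _)
    _ ≤ (M * c)⁻¹ + (M * a)⁻¹ + (a⁻¹ - c⁻¹) / M := by
        gcongr
        exacts [hbdry c (ha.trans_le hac), hbdry a ha]
    _ = 2 / (M * a) := by field_simp; ring

theorem le_integral_sin_sq_sub_quarter_div {N a c : ℝ} (ha : 0 < a) (hac : a ≤ c)
    (hNa : 1 ≤ N * a) :
    log (c / a) / 4 - 1 / 2 ≤ ∫ u in a..c, (sin (N * u) ^ 2 - 1 / 4) / u := by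
  have hN : 0 < N := pos_of_mul_pos_left (one_pos.trans_le hNa) ha.le
  have h0 : (0 : ℝ) ∉ uIcc a c := by
    rw [uIcc_of_le hac]; exact fun h => ha.not_ge h.1
  have hcos : ContinuousOn (fun u => cos (2 * N * u) / u) (uIcc a c) :=
    (by fun_prop : Continuous fun u => cos (2 * N * u)).continuousOn.div continuousOn_id
      fun u hu => ne_of_mem_of_not_mem hu h0
  have hsplit : ∫ u in a..c, (sin (N * u) ^ 2 - 1 / 4) / u
      = 4⁻¹ * log (c / a) - 2⁻¹ * ∫ u in a..c, cos (2 * N * u) / u := by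
    rw [← integral_inv h0, ← intervalIntegral.integral_const_mul,
      ← intervalIntegral.integral_const_mul, ← intervalIntegral.integral_sub
        ((intervalIntegrable_inv_iff.2 (Or.inr h0)).const_mul _)
        (hcos.intervalIntegrable.const_mul _)]
    refine intervalIntegral.integral_congr fun u _ => ?_
    rw [sin_sq_eq_half_sub, mul_assoc]
    ring
  have hbound := abs_integral_cos_mul_div_le (by positivity : 0 < 2 * N) ha hac
  have hbound_le_one : 2 / (2 * N * a) ≤ 1 := by
    rw [div_le_one (by positivity)]; linarith
  rw [hsplit]
  linarith [le_abs_self (∫ u in a..c, cos (2 * N * u) / u)]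

theorem sum_range_succ_le_two_mul_of_two_mul_le {x : ℕ → ℝ} (h0 : 0 ≤ x 0)
    (hx : ∀ j, 2 * x j ≤ x (j + 1)) (j : ℕ) :
    ∑ m ∈ Finset.range (j + 1), x m ≤ 2 * x j := by
  induction j with
  | zero => simp only [zero_add, Finset.sum_range_one]; linarith
  | succ j ih => rw [Finset.sum_range_succ]; linarith [hx j]

theorem abs_sub_sum_abs_sub_tsum_abs_le_abs_tsum {f : ℕ → ℝ} (hf : Summable f) (j : ℕ) :
    |f j| - ∑ m ∈ Finset.range j, |f m| - ∑' m, |f (m + (j + 1))| ≤ |∑' m, f m| := by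
  rw [← hf.sum_add_tsum_nat_add (j + 1), Finset.sum_range_succ]
  have hhead := Finset.abs_sum_le_sum_abs f (Finset.range j)
  have htail : |∑' m, f (m + (j + 1))| ≤ ∑' m, |f (m + (j + 1))| :=
    norm_tsum_le_tsum_norm ((summable_nat_add_iff (j + 1)).2 hf).norm
  set A := ∑ m ∈ Finset.range j, f m
  set B := ∑' m, f (m + (j + 1))
  have hsum : f j = (A + f j + B) + -A + -B := by ring
  have := abs_add_three (A + f j + B) (-A) (-B)
  rw [← hsum, abs_neg, abs_neg] at this
  linarith

theorem ofReal_integral_le_lintegral_ofReal {α : Type*} [MeasurableSpace α] {μ : Measure α}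
    {f : α → ℝ} (hf : Integrable f μ) :
    ENNReal.ofReal (∫ x, f x ∂μ) ≤ ∫⁻ x, ENNReal.ofReal (f x) ∂μ := by
  rw [integral_eq_lintegral_pos_part_sub_lintegral_neg_part hf]
  exact (ENNReal.ofReal_le_ofReal (sub_le_self _ ENNReal.toReal_nonneg)).trans
    ENNReal.ofReal_toReal_le

theorem lintegral_eq_top_of_pairwise_disjoint {α : Type*} [MeasurableSpace α] {μ : Measure α}
    {F : α → ℝ≥0∞} {s : Set α} {S : ℕ → Set α} {c : ℝ≥0∞} (hc : c ≠ 0)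
    (hS : ∀ j, MeasurableSet (S j)) (hdisj : Pairwise (Function.onFun Disjoint S))
    (hsub : ∀ j, S j ⊆ s) (hle : ∀ j, c ≤ ∫⁻ x in S j, F x ∂μ) :
    ∫⁻ x in s, F x ∂μ = ⊤ := by
  refine top_le_iff.1 ?_
  calc ⊤ = ∑' _ : ℕ, c := (ENNReal.tsum_const_eq_top_of_ne_zero hc).symm
    _ ≤ ∑' j, ∫⁻ x in S j, F x ∂μ := ENNReal.tsum_le_tsum hle
    _ = ∫⁻ x in ⋃ j, S j, F x ∂μ := (lintegral_iUnion hS hdisj _).symm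
    _ ≤ ∫⁻ x in s, F x ∂μ := lintegral_mono_set (iUnion_subset hsub)

namespace LacunarySine

noncomputable def weight (j : ℕ) : ℝ := (100 : ℝ)⁻¹ ^ j

def gap (j : ℕ) : ℕ := 3 ^ (4 * 100 ^ (j + 1) + 2)

def freq : ℕ → ℕ
  | 0 => 1
  | j + 1 => 1600 * freq j * gap j

noncomputable def coeff : ℕ → ℝ := Function.extend freq weight 0

def window (j : ℕ) : Set ℝ := Ioc (freq (j + 1) : ℝ)⁻¹ (1600 * freq j : ℝ)⁻¹

theorem weight_pos (j : ℕ) : 0 < weight j := by unfold weight; positivity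

theorem weight_succ (j : ℕ) : weight (j + 1) = weight j / 100 := by
  rw [weight, weight, pow_succ, div_eq_mul_inv]

theorem summable_weight : Summable weight :=
  summable_geometric_of_lt_one (by norm_num) (by norm_num)

theorem tsum_weight_nat_add_le (j : ℕ) : ∑' m, weight (m + (j + 2)) ≤ weight (j + 1) / 8 := by
  simp_rw [weight, pow_add]
  rw [tsum_mul_right, tsum_geometric_of_lt_one (by norm_num) (by norm_num)]
  have : (0 : ℝ) < 100⁻¹ ^ j := by positivity
  norm_num
  linarith

theorem abs_weight_mul_sin_le (j : ℕ) (x : ℝ) : |weight j * sin x| ≤ weight j := by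
  rw [abs_mul, abs_of_pos (weight_pos j)]
  exact mul_le_of_le_one_right (weight_pos j).le (abs_sin_le_one x)

theorem summable_weight_mul_sin (x : ℕ → ℝ) : Summable fun j => weight j * sin (x j) :=
  summable_weight.of_norm_bounded fun j => abs_weight_mul_sin_le j (x j)

theorem gap_pos (j : ℕ) : 0 < gap j := by unfold gap; positivity

theorem freq_pos (j : ℕ) : 0 < freq j := by
  induction j with
  | zero => simp [freq]
  | succ j ih => have := gap_pos j; simp only [freq]; positivity

theorem freq_strictMono : StrictMono freq := strictMono_nat_of_lt_succ fun j =>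
  calc freq j < 1600 * freq j := by have := freq_pos j; omega
    _ ≤ 1600 * freq j * gap j := Nat.le_mul_of_pos_right _ (gap_pos j)

theorem coeff_nonneg (k : ℕ) : 0 ≤ coeff k := by
  by_cases h : ∃ j, freq j = k
  · obtain ⟨j, rfl⟩ := h
    rw [coeff, freq_strictMono.injective.extend_apply]
    exact (weight_pos j).le
  · rw [coeff, Function.extend_apply' _ _ _ h, Pi.zero_apply]

theorem summable_coeff : Summable coeff :=
  (summable_extend_zero freq_strictMono.injective).2 summable_weight

theorem tsum_coeff_mul_sin (u : ℝ) :
    ∑' k : ℕ, coeff k * sin (k * u) = ∑' j, weight j * sin (freq j * u) := by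
  have : (fun k : ℕ => coeff k * sin (k * u))
      = Function.extend freq (fun j => weight j * sin (freq j * u)) 0 := by
    funext k
    by_cases h : ∃ j, freq j = k
    · obtain ⟨j, rfl⟩ := h
      rw [coeff, freq_strictMono.injective.extend_apply, freq_strictMono.injective.extend_apply]
    · rw [coeff, Function.extend_apply' _ _ _ h, Function.extend_apply' _ _ _ h, Pi.zero_apply,
        zero_mul]
  rw [this, tsum_extend_zero freq_strictMono.injective]

theorem two_mul_weight_mul_freq_le (j : ℕ) :
    2 * (weight j * freq j) ≤ weight (j + 1) * freq (j + 1) := by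
  have hgap : (1 : ℝ) ≤ gap j := by exact_mod_cast gap_pos j
  have : 0 ≤ weight j * freq j := by have := weight_pos j; positivity
  rw [weight_succ, freq]
  push_cast
  nlinarith

theorem sum_abs_weight_mul_sin_le {j : ℕ} {u : ℝ} (hu0 : 0 ≤ u)
    (hu : u ≤ (1600 * freq j : ℝ)⁻¹) :
    ∑ m ∈ Finset.range (j + 1), |weight m * sin (freq m * u)| ≤ weight (j + 1) / 8 := by
  have hfreq : (0 : ℝ) < freq j := by exact_mod_cast freq_pos j
  calc ∑ m ∈ Finset.range (j + 1), |weight m * sin (freq m * u)|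
      ≤ ∑ m ∈ Finset.range (j + 1), weight m * freq m * u := by
        refine Finset.sum_le_sum fun m _ => ?_
        rw [abs_mul, abs_of_pos (weight_pos m), mul_assoc]
        refine mul_le_mul_of_nonneg_left ((abs_sin_le_abs).trans_eq ?_) (weight_pos m).le
        exact abs_of_nonneg (by positivity)
    _ = (∑ m ∈ Finset.range (j + 1), weight m * freq m) * u := (Finset.sum_mul ..).symm
    _ ≤ 2 * (weight j * freq j) * (1600 * freq j : ℝ)⁻¹ :=
        mul_le_mul (sum_range_succ_le_two_mul_of_two_mul_le (by simp [weight, freq])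
          two_mul_weight_mul_freq_le j) hu hu0 (by have := weight_pos j; positivity)
    _ = weight (j + 1) / 8 := by rw [weight_succ]; field_simp; ring

theorem tsum_abs_weight_mul_sin_le (j : ℕ) (u : ℝ) :
    ∑' m, |weight (m + (j + 2)) * sin (freq (m + (j + 2)) * u)| ≤ weight (j + 1) / 8 := by
  have hw : Summable fun m => weight (m + (j + 2)) :=
    (summable_nat_add_iff (j + 2)).2 summable_weight
  have hle : ∀ m,
      |weight (m + (j + 2)) * sin (freq (m + (j + 2)) * u)| ≤ weight (m + (j + 2)) :=
    fun m => abs_weight_mul_sin_le _ _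
  exact (Summable.tsum_le_tsum hle (hw.of_nonneg_of_le (fun _ => abs_nonneg _) hle) hw).trans
    (tsum_weight_nat_add_le j)

theorem weight_mul_sin_sq_sub_quarter_le {j : ℕ} {u : ℝ} (hu : u ∈ window j) :
    weight (j + 1) * (sin (freq (j + 1) * u) ^ 2 - 1 / 4)
      ≤ |∑' m, weight m * sin (freq m * u)| := by
  have hu0 : 0 < u := lt_trans (by have := freq_pos (j + 1); positivity) hu.1
  have hterm : weight (j + 1) * sin (freq (j + 1) * u) ^ 2
      ≤ |weight (j + 1) * sin (freq (j + 1) * u)| := by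
    rw [abs_mul, abs_of_pos (weight_pos _), ← sq_abs (sin _)]
    exact mul_le_mul_of_nonneg_left
      (pow_le_of_le_one (abs_nonneg _) (abs_sin_le_one _) two_ne_zero) (weight_pos _).le
  have := abs_sub_sum_abs_sub_tsum_abs_le_abs_tsum
    (summable_weight_mul_sin fun m => freq m * u) (j + 1)
  have := sum_abs_weight_mul_sin_le hu0.le hu.2
  have := tsum_abs_weight_mul_sin_le j u
  linarith

theorem le_log_gap (j : ℕ) : 4 * (100 : ℝ) ^ (j + 1) + 2 ≤ log (gap j) := by
  have hlog3 : 1 ≤ log 3 := by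
    rw [le_log_iff_exp_le (by norm_num)]
    exact exp_one_lt_d9.le.trans (by norm_num)
  rw [gap, Nat.cast_pow, log_pow]
  push_cast
  nlinarith [show (0 : ℝ) ≤ 4 * 100 ^ (j + 1) + 2 by positivity]

theorem one_le_lintegral_window (j : ℕ) :
    1 ≤ ∫⁻ u in window j, ENNReal.ofReal (|∑' k : ℕ, coeff k * sin (k * u)| / u) := by
  set N : ℝ := (freq (j + 1) : ℝ)
  set a : ℝ := N⁻¹
  set c : ℝ := (1600 * freq j : ℝ)⁻¹
  have hfreq : (0 : ℝ) < freq j := by exact_mod_cast freq_pos j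
  have hN : N = 1600 * freq j * gap j := by simp [N, freq]
  have hgap : (1 : ℝ) ≤ gap j := by exact_mod_cast gap_pos j
  have hNpos : 0 < N := by rw [hN]; positivity
  have ha : 0 < a := inv_pos.2 hNpos
  have hac : a ≤ c := inv_anti₀ (by positivity) (by rw [hN]; nlinarith)
  have hNa : N * a = 1 := mul_inv_cancel₀ hNpos.ne'
  have hca : c / a = gap j := by
    have hc : c * (1600 * freq j) = 1 := inv_mul_cancel₀ (by positivity)
    rw [div_eq_mul_inv, inv_inv, hN, ← mul_assoc, hc, one_mul]
  set g : ℝ → ℝ := fun u => weight (j + 1) * (sin (N * u) ^ 2 - 1 / 4) / u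
  have hg : IntervalIntegrable g volume a c := by
    refine ContinuousOn.intervalIntegrable ?_
    exact ((by fun_prop : Continuous fun u => weight (j + 1) * (sin (N * u) ^ 2 - 1 / 4))
      |>.continuousOn).div continuousOn_id fun u hu => (ha.trans_le (uIcc_of_le hac ▸ hu).1).ne'
  have hint : 1 ≤ ∫ u in window j, g u := by
    rw [window, ← intervalIntegral.integral_of_le hac]
    simp only [g, mul_div_assoc]
    rw [intervalIntegral.integral_const_mul]
    have hosc := le_integral_sin_sq_sub_quarter_div ha hac hNa.ge
    rw [hca] at hosc
    have hw : weight (j + 1) * 100 ^ (j + 1) = 1 := by rw [weight, ← mul_pow]; norm_num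
    nlinarith [le_log_gap j, weight_pos (j + 1)]
  calc (1 : ℝ≥0∞) = ENNReal.ofReal 1 := ENNReal.ofReal_one.symm
    _ ≤ ENNReal.ofReal (∫ u in window j, g u) := ENNReal.ofReal_le_ofReal hint
    _ ≤ ∫⁻ u in window j, ENNReal.ofReal (g u) :=
        ofReal_integral_le_lintegral_ofReal
          ((intervalIntegrable_iff_integrableOn_Ioc_of_le hac).1 hg)
    _ ≤ ∫⁻ u in window j, ENNReal.ofReal (|∑' k : ℕ, coeff k * sin (k * u)| / u) := by
        refine setLIntegral_mono' measurableSet_Ioc fun u hu => ENNReal.ofReal_le_ofReal ?_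
        rw [tsum_coeff_mul_sin]
        exact div_le_div_of_nonneg_right (weight_mul_sin_sq_sub_quarter_le hu)
          (ha.trans hu.1).le

theorem window_subset (j : ℕ) : window j ⊆ Ioc 0 1 := by
  have hfreq : (1 : ℝ) ≤ freq j := by exact_mod_cast freq_pos j
  exact Ioc_subset_Ioc (by have := freq_pos (j + 1); positivity)
    (inv_le_one_of_one_le₀ (by linarith))

theorem pairwise_disjoint_window : Pairwise (Function.onFun Disjoint window) := by
  have hanti : Antitone fun j => (freq j : ℝ)⁻¹ := fun i j hij =>
    inv_anti₀ (by exact_mod_cast freq_pos i) (by exact_mod_cast freq_strictMono.monotone hij)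
  refine hanti.pairwise_disjoint_on_Ioc_succ.mono fun i j h => h.mono ?_ ?_ <;>
  exact Ioc_subset_Ioc_right (inv_anti₀ (by exact_mod_cast freq_pos _)
    (le_mul_of_one_le_left (Nat.cast_nonneg _) (by norm_num)))

end LacunarySine

/-- There is a nonnegative summable sequence `b_k` such that
`f₁(u) = Σ_k b_k sin(ku)` (a function of the Wiener algebra `W(ℝ)`) satisfies
`∫_0^1 |f₁(u)|/u du = ∞`: the improper integral of Lemma 1 need not converge
absolutely. -/
theorem exists_wiener_sine_series_nonabsolute :
    ∃ b : ℕ → ℝ, (∀ k : ℕ, 0 ≤ b k) ∧ Summable b ∧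
      ∫⁻ u in Set.Ioc (0 : ℝ) 1,
        ENNReal.ofReal (|∑' k : ℕ, b k * Real.sin (k * u)| / u) = ⊤ := by
  open LacunarySine in
  exact ⟨coeff, coeff_nonneg, summable_coeff,
    lintegral_eq_top_of_pairwise_disjoint one_ne_zero (fun _ => measurableSet_Ioc)
      pairwise_disjoint_window window_subset one_le_lintegral_window⟩
end
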